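/- arXiv:2005.09840 — 9 statements merged into one kernel-verified Lean document; each statement's English description precedes it below -/
import Mathlib

section
/- Let H_0, H_1, ..., be a family of inner product spaces with linear maps D_j : H_j → H_j, T_j^+ : H_j → H_{j+1}, T_j^- : H_j → H_{j-1}, Δ_j : H_j → H_j and a constant c, satisfying for all j: (i) Δ_j = D_j² + (T_j^-)*T_j^- + (j(n+j-2) - n(n-1)/8)c, (ii) Δ_j = (T_j^+)*T_j^+ + ((n+2j-2)²/(n+2j)²)D_j² + ((j+1)(n+j-1) - n(n-1)/8)c, (iii) T_j^- D_j = ((n+2j-4)/(n+2j-2)) D_{j-1} T_j^-, (iv) D_j T_{j-1}^+ = ((n+2j-4)/(n+2j-2)) T_{j-1}^+ D_{j-1}, (v) T_{j-1}^+ = (T_j^-)*, and (vi) T_0^- = 0. Define B(s;j) := D_j² - ((n+2s-2)²/(n+2j-2)²)(Δ_j - (s(n+s-2) - n(n-1)/8)c). Then for every j ≥ 0, the product B(0;j)∘B(1;j)∘...∘B(j;j) = 0 on H_j. -/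
/-!
The factors `B(s;j+1)` intertwine with the twistor operator `T_j^+` up to the scalar
`((n+2j-2)/(n+2j))²`, because `D` does so with the scalar `(n+2j-2)/(n+2j)` by (iv) and `Δ`
commutes with `T_j^+` by comparing (i) and (ii). Hence `(∏_{s ≤ j} B(s;j+1)) ∘ T_j^+` is a multiple
of `T_j^+ ∘ ∏_{s ≤ j} B(s;j)`, which vanishes by induction, while the last factor `B(j+1;j+1)`
equals `-T_j^+ T_{j+1}^-` by (i) and so has range inside that of `T_j^+`.
-/

open scoped RealInnerProductSpace

section Intertwining

variable {R M N : Type*} [CommSemiring R] [AddCommMonoid M] [AddCommMonoid N]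
  [Module R M] [Module R N]

theorem Module.End.mul_comp_eq_smul_comp_mul {A B : Module.End R N} {A' B' : Module.End R M}
    {T : M →ₗ[R] N} {r q : R} (hA : A ∘ₗ T = r • (T ∘ₗ A')) (hB : B ∘ₗ T = q • (T ∘ₗ B')) :
    (A * B) ∘ₗ T = (r * q) • (T ∘ₗ (A' * B')) := by
  rw [Module.End.mul_eq_comp, Module.End.mul_eq_comp, LinearMap.comp_assoc, hB,
    LinearMap.comp_smul, ← LinearMap.comp_assoc, hA, LinearMap.smul_comp, smul_smul,
    LinearMap.comp_assoc, mul_comm q]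

theorem List.prod_map_comp_eq_smul_comp_prod_map {ι : Type*} {B : ι → Module.End R N}
    {B' : ι → Module.End R M} {T : M →ₗ[R] N} {r : R} (h : ∀ i, B i ∘ₗ T = r • (T ∘ₗ B' i)) :
    ∀ l : List ι, (l.map B).prod ∘ₗ T = r ^ l.length • (T ∘ₗ (l.map B').prod)
  | [] => by simp [Module.End.one_eq_id]
  | i :: l => by
    rw [List.map_cons, List.map_cons, List.prod_cons, List.prod_cons, List.length_cons, pow_succ',
      Module.End.mul_comp_eq_smul_comp_mul (h i) (List.prod_map_comp_eq_smul_comp_prod_map h l)]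

theorem List.prod_map_range_eq_zero_of_comp_eq_smul_comp {H : ℕ → Type*}
    [∀ j, AddCommMonoid (H j)] [∀ j, Module R (H j)] (B : ∀ j, ℕ → Module.End R (H j))
    (T : ∀ j, H j →ₗ[R] H (j + 1)) (S : ∀ j, H (j + 1) →ₗ[R] H j) (r : ℕ → R)
    (h_zero : B 0 0 = 0) (h_succ_self : ∀ j, B (j + 1) (j + 1) = T j ∘ₗ S j)
    (h_comp : ∀ j s, B (j + 1) s ∘ₗ T j = r j • (T j ∘ₗ B j s)) :
    ∀ j, ((List.range (j + 1)).map (B j)).prod = 0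
  | 0 => by simpa using h_zero
  | j + 1 => by
    have h_prod_comp : ((List.range (j + 1)).map (B (j + 1))).prod ∘ₗ T j = 0 := by
      rw [List.prod_map_comp_eq_smul_comp_prod_map (h_comp j),
        List.prod_map_range_eq_zero_of_comp_eq_smul_comp B T S r h_zero h_succ_self h_comp j]
      simp
    rw [List.range_succ, List.map_append, List.prod_append, List.map_singleton,
      List.prod_singleton, h_succ_self, Module.End.mul_eq_comp, ← LinearMap.comp_assoc,
      h_prod_comp, LinearMap.zero_comp]

end Intertwining

section Weitzenbock

variable {H : ℕ → Type*} [∀ j, AddCommGroup (H j)] [∀ j, Module ℝ (H j)]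
  (n : ℕ) (c : ℝ) (D Δ : ∀ j, Module.End ℝ (H j))

/-- The paper's `B(s;j)`, with the arguments in the order `j s`. -/
noncomputable def factorOp (j s : ℕ) : Module.End ℝ (H j) :=
  D j * D j - ((((n : ℝ) + 2 * (s : ℝ) - 2) ^ 2 / ((n : ℝ) + 2 * (j : ℝ) - 2) ^ 2) : ℝ)
    • (Δ j - (((s : ℝ) * ((n : ℝ) + (s : ℝ) - 2) - (n : ℝ) * ((n : ℝ) - 1) / 8) * c) • 1)

variable {n c D Δ} {Tp : ∀ j, H j →ₗ[ℝ] H (j + 1)} {Tm : ∀ j, H (j + 1) →ₗ[ℝ] H j}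

theorem factorOp_self (j : ℕ) (hj : (n : ℝ) + 2 * (j : ℝ) - 2 ≠ 0) :
    factorOp n c D Δ j j
      = D j * D j - (Δ j - (((j : ℝ) * ((n : ℝ) + (j : ℝ) - 2)
          - (n : ℝ) * ((n : ℝ) - 1) / 8) * c) • 1) := by
  rw [factorOp, div_self (pow_ne_zero 2 hj), one_smul]

theorem factorOp_zero_zero (hn : (n : ℝ) ≠ 2)
    (hi0 : Δ 0 = D 0 * D 0 + ((-((n : ℝ) * ((n : ℝ) - 1) / 8)) * c) • 1) :
    factorOp n c D Δ 0 0 = 0 := by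
  rw [factorOp_self 0 (by simpa [sub_eq_zero] using hn), hi0]
  simp

theorem factorOp_succ_self (j : ℕ) (hj : (n : ℝ) + 2 * ((j + 1 : ℕ) : ℝ) - 2 ≠ 0)
    (hi : Δ (j + 1) = D (j + 1) * D (j + 1) + (Tp j ∘ₗ Tm j : Module.End ℝ (H (j + 1)))
        + ((((j : ℝ) + 1) * ((n : ℝ) + (j : ℝ) - 1) - (n : ℝ) * ((n : ℝ) - 1) / 8) * c) • 1) :
    factorOp n c D Δ (j + 1) (j + 1) = Tp j ∘ₗ (-Tm j) := by
  rw [factorOp_self (j + 1) hj, hi, LinearMap.comp_neg]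
  push_cast
  ring_nf
  abel

theorem laplace_comp_twistor (j : ℕ)
    (hi : Δ (j + 1) = D (j + 1) * D (j + 1) + (Tp j ∘ₗ Tm j : Module.End ℝ (H (j + 1)))
        + ((((j : ℝ) + 1) * ((n : ℝ) + (j : ℝ) - 1) - (n : ℝ) * ((n : ℝ) - 1) / 8) * c) • 1)
    (hii : Δ j = (Tm j ∘ₗ Tp j : Module.End ℝ (H j))
        + ((((n : ℝ) + 2 * (j : ℝ) - 2) ^ 2 / ((n : ℝ) + 2 * (j : ℝ)) ^ 2) : ℝ) • (D j * D j)
        + ((((j : ℝ) + 1) * ((n : ℝ) + (j : ℝ) - 1) - (n : ℝ) * ((n : ℝ) - 1) / 8) * c) • 1)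
    (hD2 : (D (j + 1) * D (j + 1)) ∘ₗ Tp j
        = ((((n : ℝ) + 2 * (j : ℝ) - 2) ^ 2 / ((n : ℝ) + 2 * (j : ℝ)) ^ 2) : ℝ)
          • (Tp j ∘ₗ (D j * D j))) :
    Δ (j + 1) ∘ₗ Tp j = Tp j ∘ₗ Δ j := by
  rw [hi, hii]
  simp only [LinearMap.add_comp, LinearMap.comp_add, LinearMap.smul_comp, LinearMap.comp_smul,
    Module.End.one_eq_id, LinearMap.id_comp, LinearMap.comp_id, hD2, LinearMap.comp_assoc]
  abel

theorem factorOp_succ_comp_twistor (j s : ℕ) (hj : (n : ℝ) + 2 * (j : ℝ) - 2 ≠ 0)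
    (hi : Δ (j + 1) = D (j + 1) * D (j + 1) + (Tp j ∘ₗ Tm j : Module.End ℝ (H (j + 1)))
        + ((((j : ℝ) + 1) * ((n : ℝ) + (j : ℝ) - 1) - (n : ℝ) * ((n : ℝ) - 1) / 8) * c) • 1)
    (hii : Δ j = (Tm j ∘ₗ Tp j : Module.End ℝ (H j))
        + ((((n : ℝ) + 2 * (j : ℝ) - 2) ^ 2 / ((n : ℝ) + 2 * (j : ℝ)) ^ 2) : ℝ) • (D j * D j)
        + ((((j : ℝ) + 1) * ((n : ℝ) + (j : ℝ) - 1) - (n : ℝ) * ((n : ℝ) - 1) / 8) * c) • 1)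
    (hiv : (D (j + 1) : H (j + 1) →ₗ[ℝ] H (j + 1)) ∘ₗ Tp j
        = (((n : ℝ) + 2 * (j : ℝ) - 2) / ((n : ℝ) + 2 * (j : ℝ)))
          • (Tp j ∘ₗ (D j : H j →ₗ[ℝ] H j))) :
    factorOp n c D Δ (j + 1) s ∘ₗ Tp j
      = (((n : ℝ) + 2 * (j : ℝ) - 2) ^ 2 / ((n : ℝ) + 2 * (j : ℝ)) ^ 2)
        • (Tp j ∘ₗ factorOp n c D Δ j s) := by
  have hD2 := Module.End.mul_comp_eq_smul_comp_mul hiv hiv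
  rw [← sq (((n : ℝ) + 2 * (j : ℝ) - 2) / ((n : ℝ) + 2 * (j : ℝ))), div_pow] at hD2
  have hscalar : ((n : ℝ) + 2 * (s : ℝ) - 2) ^ 2 / ((n : ℝ) + 2 * ((j + 1 : ℕ) : ℝ) - 2) ^ 2
      = ((n : ℝ) + 2 * (j : ℝ) - 2) ^ 2 / ((n : ℝ) + 2 * (j : ℝ)) ^ 2
        * (((n : ℝ) + 2 * (s : ℝ) - 2) ^ 2 / ((n : ℝ) + 2 * (j : ℝ) - 2) ^ 2) := by
    push_cast
    field_simp
    ring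
  rw [factorOp, factorOp, hscalar]
  simp only [LinearMap.sub_comp, LinearMap.comp_sub, LinearMap.smul_comp, LinearMap.comp_smul,
    Module.End.one_eq_id, LinearMap.id_comp, LinearMap.comp_id, hD2,
    laplace_comp_twistor j hi hii hD2]
  module

end Weitzenbock

/-- `Tp j` is `T_j^+ : H j → H (j+1)`, while `Tm j` is `T_{j+1}^- : H (j+1) → H j`. -/
theorem factorization_spinor_general (n : ℕ) (hn : 3 ≤ n) (c : ℝ)
    (H : ℕ → Type*) [∀ j, NormedAddCommGroup (H j)] [∀ j, InnerProductSpace ℝ (H j)]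
    (D Δ : ∀ j, Module.End ℝ (H j))
    (Tp : ∀ j, H j →ₗ[ℝ] H (j + 1))
    (Tm : ∀ j, H (j + 1) →ₗ[ℝ] H j)
    -- (i) at `j = 0`, using (vi) `T_0^- = 0`
    (hi0 : Δ 0 = D 0 * D 0 + ((-((n : ℝ) * ((n : ℝ) - 1) / 8)) * c) • 1)
    -- (i) at `j + 1`
    (hi : ∀ j, Δ (j + 1) = D (j + 1) * D (j + 1)
        + (Tp j ∘ₗ Tm j : Module.End ℝ (H (j + 1)))
        + ((((j : ℝ) + 1) * ((n : ℝ) + (j : ℝ) - 1) - (n : ℝ) * ((n : ℝ) - 1) / 8) * c) • 1)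
    -- (ii)
    (hii : ∀ j, Δ j = (Tm j ∘ₗ Tp j : Module.End ℝ (H j))
        + ((((n : ℝ) + 2 * (j : ℝ) - 2) ^ 2 / ((n : ℝ) + 2 * (j : ℝ)) ^ 2) : ℝ) • (D j * D j)
        + ((((j : ℝ) + 1) * ((n : ℝ) + (j : ℝ) - 1) - (n : ℝ) * ((n : ℝ) - 1) / 8) * c) • 1)
    -- (iv)
    (hiv : ∀ j, (D (j + 1) : H (j + 1) →ₗ[ℝ] H (j + 1)) ∘ₗ Tp j
        = (((n : ℝ) + 2 * (j : ℝ) - 2) / ((n : ℝ) + 2 * (j : ℝ)))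
          • (Tp j ∘ₗ (D j : H j →ₗ[ℝ] H j))) :
    ∀ j, ((List.range (j + 1)).map (fun s =>
      D j * D j - ((((n : ℝ) + 2 * (s : ℝ) - 2) ^ 2 / ((n : ℝ) + 2 * (j : ℝ) - 2) ^ 2) : ℝ)
        • (Δ j - (((s : ℝ) * ((n : ℝ) + (s : ℝ) - 2) - (n : ℝ) * ((n : ℝ) - 1) / 8) * c) • 1))).prod
      = 0 := by
  have hden : ∀ j : ℕ, (n : ℝ) + 2 * (j : ℝ) - 2 ≠ 0 := fun j => by
    have : (3 : ℝ) ≤ n := by exact_mod_cast hn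
    have : (0 : ℝ) ≤ j := j.cast_nonneg
    exact ne_of_gt (by linarith)
  intro j
  -- The cast `(s : ℝ)` in the statement turns `List.range (j + 1)` itself into a `List ℝ`
  -- through the list monad.
  simp only [bind_pure_comp, Functor.map, List.map_map]
  exact List.prod_map_range_eq_zero_of_comp_eq_smul_comp (factorOp n c D Δ) Tp (fun j => -Tm j)
    (fun j => ((n : ℝ) + 2 * (j : ℝ) - 2) ^ 2 / ((n : ℝ) + 2 * (j : ℝ)) ^ 2)
    (factorOp_zero_zero (by norm_cast; omega) hi0)
    (fun j => factorOp_succ_self j (hden (j + 1)) (hi j))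
    (fun j s => factorOp_succ_comp_twistor j s (hden j) (hi j) (hii j) (hiv j)) j

/-- Factorization formula (Theorem `thm:fact`), abstract form.  Given inner product
spaces `H j` with operators `D j`, `Δ j : H j → H j`, twistor operators
`Tp j = T_j^+ : H j → H (j+1)` and co-twistor operators `Tm j = T_{j+1}^- : H (j+1) → H j`
satisfying the Weitzenböck identities (i)–(vi) on a space of constant curvature `c`
(hypothesis (v) being that `T_j^+` is the adjoint of `T_{j+1}^-`, and (vi), `T_0^- = 0`,
being incorporated in the `j = 0` case of (i)), the operators
`B(s;j) = D_j² - ((n+2s-2)²/(n+2j-2)²)(Δ_j - (s(n+s-2) - n(n-1)/8)c)` satisfy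
`B(0;j) ∘ B(1;j) ∘ ⋯ ∘ B(j;j) = 0`. -/
theorem factorization_spinor (n : ℕ) (hn : 3 ≤ n) (c : ℝ)
    (H : ℕ → Type*) [∀ j, NormedAddCommGroup (H j)] [∀ j, InnerProductSpace ℝ (H j)]
    (D Δ : ∀ j, Module.End ℝ (H j))
    (Tp : ∀ j, H j →ₗ[ℝ] H (j + 1))
    (Tm : ∀ j, H (j + 1) →ₗ[ℝ] H j)
    -- (v) : `T_j^+ = (T_{j+1}^-)^*`
    (hv : ∀ j (x : H j) (y : H (j + 1)), ⟪Tp j x, y⟫ = ⟪x, Tm j y⟫)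
    -- (i) at `j = 0`, using (vi) `T_0^- = 0`
    (hi0 : Δ 0 = D 0 * D 0 + ((-((n : ℝ) * ((n : ℝ) - 1) / 8)) * c) • 1)
    -- (i) at `j + 1`
    (hi : ∀ j, Δ (j + 1) = D (j + 1) * D (j + 1)
        + (Tp j ∘ₗ Tm j : Module.End ℝ (H (j + 1)))
        + ((((j : ℝ) + 1) * ((n : ℝ) + (j : ℝ) - 1) - (n : ℝ) * ((n : ℝ) - 1) / 8) * c) • 1)
    -- (ii)
    (hii : ∀ j, Δ j = (Tm j ∘ₗ Tp j : Module.End ℝ (H j))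
        + ((((n : ℝ) + 2 * (j : ℝ) - 2) ^ 2 / ((n : ℝ) + 2 * (j : ℝ)) ^ 2) : ℝ) • (D j * D j)
        + ((((j : ℝ) + 1) * ((n : ℝ) + (j : ℝ) - 1) - (n : ℝ) * ((n : ℝ) - 1) / 8) * c) • 1)
    -- (iii)
    (hiii : ∀ j, Tm j ∘ₗ (D (j + 1) : H (j + 1) →ₗ[ℝ] H (j + 1))
        = (((n : ℝ) + 2 * (j : ℝ) - 2) / ((n : ℝ) + 2 * (j : ℝ)))
          • ((D j : H j →ₗ[ℝ] H j) ∘ₗ Tm j))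
    -- (iv)
    (hiv : ∀ j, (D (j + 1) : H (j + 1) →ₗ[ℝ] H (j + 1)) ∘ₗ Tp j
        = (((n : ℝ) + 2 * (j : ℝ) - 2) / ((n : ℝ) + 2 * (j : ℝ)))
          • (Tp j ∘ₗ (D j : H j →ₗ[ℝ] H j))) :
    ∀ j, ((List.range (j + 1)).map (fun s =>
      D j * D j - ((((n : ℝ) + 2 * (s : ℝ) - 2) ^ 2 / ((n : ℝ) + 2 * (j : ℝ) - 2) ^ 2) : ℝ)
        • (Δ j - (((s : ℝ) * ((n : ℝ) + (s : ℝ) - 2) - (n : ℝ) * ((n : ℝ) - 1) / 8) * c) • 1))).prod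
      = 0 :=
  factorization_spinor_general n hn c H D Δ Tp Tm hi0 hi hii hiv
end

section
/- Under the hypotheses of the abstract factorization setup, for all s and j one has T_j^+ ∘ B(s;j) = ((n+2j)²/(n+2j-2)²) · B(s;j+1) ∘ T_j^+, and (T_j^-)* ∘ T_j^- = -B(j;j), and (T_j^+)* ∘ T_j^+ = -((n+2j-2)²/(n+2j)²) · B(j+1;j). -/
/-!
Write `a_j = n + 2j - 2`, so that `a_{j+1} = n + 2j`. By (iv), `T_j^+` intertwines `D_j` and
`D_{j+1}` up to the factor `a_j / a_{j+1}`, hence `D²` up to its square; comparing (i) at `j + 1`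
with (ii) then shows that `T_j^+` intertwines `Δ_j` and `Δ_{j+1}` exactly. Both facts together
move `T_j^+` through `B(s;j)`. The two quadratic relations are (i) and (ii) solved for
`T_j^+ T_j^-` and `T_j^- T_j^+`: the constant shifts there are precisely
`s(n+s-2) - n(n-1)/8` at `s = j + 1`.
-/

namespace LinearMap

variable {R K M N : Type*}

section CommRing

variable [CommRing R] [AddCommGroup M] [Module R M] [AddCommGroup N] [Module R N]

theorem mul_self_comp_of_comp_eq_smul {D : Module.End R M} {D' : Module.End R N}
    {T : M →ₗ[R] N} {r : R} (h : D' ∘ₗ T = r • (T ∘ₗ D)) :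
    (D' * D') ∘ₗ T = r ^ 2 • (T ∘ₗ (D * D)) := by
  rw [Module.End.mul_eq_comp, Module.End.mul_eq_comp, comp_assoc, h, comp_smul, ← comp_assoc, h,
    smul_comp, smul_smul, comp_assoc, sq]

theorem comp_eq_comp_of_eq_mul_self_add {D Δ : Module.End R M} {D' Δ' : Module.End R N}
    {T : M →ₗ[R] N} {S : N →ₗ[R] M} {r κ : R} (hD : D' ∘ₗ T = r • (T ∘ₗ D))
    (hΔ : Δ = S ∘ₗ T + r ^ 2 • (D * D) + κ • 1)
    (hΔ' : Δ' = D' * D' + T ∘ₗ S + κ • 1) :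
    T ∘ₗ Δ = Δ' ∘ₗ T := by
  rw [hΔ, hΔ']
  simp only [add_comp, comp_add, smul_comp, comp_smul, mul_self_comp_of_comp_eq_smul hD,
    comp_assoc, Module.End.one_eq_id, comp_id, id_comp]
  abel

end CommRing

variable [Field K] [AddCommGroup M] [Module K M] [AddCommGroup N] [Module K N]

theorem comp_mul_self_sub_smul {D Δ : Module.End K M} {D' Δ' : Module.End K N}
    {T : M →ₗ[K] N} {r : K} (hr : r ≠ 0) (hD : D' ∘ₗ T = r • (T ∘ₗ D))
    (hΔ : T ∘ₗ Δ = Δ' ∘ₗ T) (q μ : K) :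
    T ∘ₗ (D * D - q • (Δ - μ • 1)) =
      (r ^ 2)⁻¹ • ((D' * D' - (r ^ 2 * q) • (Δ' - μ • 1)) ∘ₗ T) := by
  simp only [sub_comp, comp_sub, smul_comp, comp_smul, mul_self_comp_of_comp_eq_smul hD, hΔ,
    Module.End.one_eq_id, comp_id, id_comp]
  match_scalars <;> field_simp

end LinearMap

namespace Module.End

variable {K M : Type*} [Field K] [AddCommGroup M] [Module K M]

theorem mul_self_sub_one_smul_sub {D Δ P : Module.End K M} {μ ν : K}
    (hΔ : Δ = D * D + P + μ • 1) (hν : ν = μ) : D * D - (1 : K) • (Δ - ν • 1) = -P := by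
  rw [hΔ, hν, one_smul]
  abel

theorem eq_neg_smul_mul_self_sub_smul {D Δ P : Module.End K M} {r q μ ν : K} (hr : r ≠ 0)
    (hΔ : Δ = P + r • (D * D) + μ • 1) (hq : q = r⁻¹) (hν : ν = μ) :
    P = -(r • (D * D - q • (Δ - ν • 1))) := by
  rw [hΔ, hq, hν, add_sub_cancel_right, smul_add, smul_smul, inv_mul_cancel₀ hr, one_smul,
    smul_sub, smul_add, smul_smul, mul_inv_cancel₀ hr, one_smul]
  abel

end Module.End

open scoped RealInnerProductSpace

theorem key_intertwining_relations_general (n : ℕ) (hn : 3 ≤ n) (c : ℝ)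
    (H : ℕ → Type*) [∀ j, NormedAddCommGroup (H j)] [∀ j, InnerProductSpace ℝ (H j)]
    (D Δ : ∀ j, Module.End ℝ (H j))
    (Tp : ∀ j, H j →ₗ[ℝ] H (j + 1))
    (Tm : ∀ j, H (j + 1) →ₗ[ℝ] H j)
    -- (i) at `j = 0`, using (vi) `T_0^- = 0`
    (hi0 : Δ 0 = D 0 * D 0 + ((-((n : ℝ) * ((n : ℝ) - 1) / 8)) * c) • 1)
    -- (i) at `j + 1`
    (hi : ∀ j, Δ (j + 1) = D (j + 1) * D (j + 1)
        + (Tp j ∘ₗ Tm j : Module.End ℝ (H (j + 1)))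
        + ((((j : ℝ) + 1) * ((n : ℝ) + (j : ℝ) - 1) - (n : ℝ) * ((n : ℝ) - 1) / 8) * c) • 1)
    -- (ii)
    (hii : ∀ j, Δ j = (Tm j ∘ₗ Tp j : Module.End ℝ (H j))
        + ((((n : ℝ) + 2 * (j : ℝ) - 2) ^ 2 / ((n : ℝ) + 2 * (j : ℝ)) ^ 2) : ℝ) • (D j * D j)
        + ((((j : ℝ) + 1) * ((n : ℝ) + (j : ℝ) - 1) - (n : ℝ) * ((n : ℝ) - 1) / 8) * c) • 1)
    -- (iv)
    (hiv : ∀ j, (D (j + 1) : H (j + 1) →ₗ[ℝ] H (j + 1)) ∘ₗ Tp j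
        = (((n : ℝ) + 2 * (j : ℝ) - 2) / ((n : ℝ) + 2 * (j : ℝ)))
          • (Tp j ∘ₗ (D j : H j →ₗ[ℝ] H j)))
    -- the operators `B(s;j)`
    (B : ∀ _ j : ℕ, Module.End ℝ (H j))
    (hB : ∀ s j, B s j
      = D j * D j - ((((n : ℝ) + 2 * (s : ℝ) - 2) ^ 2 / ((n : ℝ) + 2 * (j : ℝ) - 2) ^ 2) : ℝ)
        • (Δ j - (((s : ℝ) * ((n : ℝ) + (s : ℝ) - 2) - (n : ℝ) * ((n : ℝ) - 1) / 8) * c) • 1)) :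
    (∀ s j, Tp j ∘ₗ (B s j : H j →ₗ[ℝ] H j)
        = ((((n : ℝ) + 2 * (j : ℝ)) ^ 2 / ((n : ℝ) + 2 * (j : ℝ) - 2) ^ 2) : ℝ)
          • ((B s (j + 1) : H (j + 1) →ₗ[ℝ] H (j + 1)) ∘ₗ Tp j))
    ∧ (∀ j, (Tp j ∘ₗ Tm j : Module.End ℝ (H (j + 1))) = -B (j + 1) (j + 1))
    ∧ B 0 0 = 0
    ∧ (∀ j, (Tm j ∘ₗ Tp j : Module.End ℝ (H j))
        = -(((((n : ℝ) + 2 * (j : ℝ) - 2) ^ 2 / ((n : ℝ) + 2 * (j : ℝ)) ^ 2) : ℝ)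
          • B (j + 1) j)) := by
  have hpos : ∀ j : ℕ, (0 : ℝ) < n + 2 * j - 2 := fun j => by
    have : (3 : ℝ) ≤ n := by exact_mod_cast hn
    linarith [j.cast_nonneg (α := ℝ)]
  have hshift : ∀ j : ℕ, (n : ℝ) + 2 * ((j + 1 : ℕ) : ℝ) - 2 = n + 2 * j := fun j => by
    push_cast
    ring
  have hr : ∀ j : ℕ, ((n : ℝ) + 2 * j - 2) / (n + 2 * j) ≠ 0 := fun j =>
    (div_pos (hpos j) (by linarith [hpos j])).ne'
  have hΔ : ∀ j, Tp j ∘ₗ Δ j = Δ (j + 1) ∘ₗ Tp j := fun j =>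
    LinearMap.comp_eq_comp_of_eq_mul_self_add (hiv j) (by rw [hii j, div_pow]) (hi j)
  refine ⟨fun s j => ?_, fun j => ?_, ?_, fun j => ?_⟩
  · rw [hB s j, hB s (j + 1), LinearMap.comp_mul_self_sub_smul (hr j) (hiv j) (hΔ j), hshift]
    congr 1
    · field_simp
    · field_simp [(hpos j).ne']
  · rw [hB, div_self (pow_ne_zero 2 (hpos _).ne'),
      Module.End.mul_self_sub_one_smul_sub (hi j) (by push_cast; ring), neg_neg]
  · rw [hB, div_self (pow_ne_zero 2 (hpos _).ne'),
      Module.End.mul_self_sub_one_smul_sub (P := 0) (by rw [hi0, add_zero]) (by push_cast; ring),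
      neg_zero]
  · rw [hB]
    exact Module.End.eq_neg_smul_mul_self_sub_smul (by rw [← div_pow]; exact pow_ne_zero 2 (hr j))
      (hii j) (by rw [inv_div, hshift]) (by push_cast; ring)

/-- The key intertwining relations (eqn `2.key`) for the operators
`B(s;j) = D_j² - ((n+2s-2)²/(n+2j-2)²)(Δ_j - (s(n+s-2) - n(n-1)/8)c)` in the abstract
factorization setup:  `T_j^+ B(s;j) = ((n+2j)²/(n+2j-2)²) B(s;j+1) T_j^+`,
`(T_j^-)^* T_j^- = -B(j;j)` (for `j ≥ 1`; for `j = 0`, `T_0^- = 0` and `B(0;0) = 0`), and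
`(T_j^+)^* T_j^+ = -((n+2j-2)²/(n+2j)²) B(j+1;j)`. -/
theorem key_intertwining_relations (n : ℕ) (hn : 3 ≤ n) (c : ℝ)
    (H : ℕ → Type*) [∀ j, NormedAddCommGroup (H j)] [∀ j, InnerProductSpace ℝ (H j)]
    (D Δ : ∀ j, Module.End ℝ (H j))
    (Tp : ∀ j, H j →ₗ[ℝ] H (j + 1))
    (Tm : ∀ j, H (j + 1) →ₗ[ℝ] H j)
    -- (v) : `T_j^+ = (T_{j+1}^-)^*`
    (hv : ∀ j (x : H j) (y : H (j + 1)), ⟪Tp j x, y⟫ = ⟪x, Tm j y⟫)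
    -- (i) at `j = 0`, using (vi) `T_0^- = 0`
    (hi0 : Δ 0 = D 0 * D 0 + ((-((n : ℝ) * ((n : ℝ) - 1) / 8)) * c) • 1)
    -- (i) at `j + 1`
    (hi : ∀ j, Δ (j + 1) = D (j + 1) * D (j + 1)
        + (Tp j ∘ₗ Tm j : Module.End ℝ (H (j + 1)))
        + ((((j : ℝ) + 1) * ((n : ℝ) + (j : ℝ) - 1) - (n : ℝ) * ((n : ℝ) - 1) / 8) * c) • 1)
    -- (ii)
    (hii : ∀ j, Δ j = (Tm j ∘ₗ Tp j : Module.End ℝ (H j))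
        + ((((n : ℝ) + 2 * (j : ℝ) - 2) ^ 2 / ((n : ℝ) + 2 * (j : ℝ)) ^ 2) : ℝ) • (D j * D j)
        + ((((j : ℝ) + 1) * ((n : ℝ) + (j : ℝ) - 1) - (n : ℝ) * ((n : ℝ) - 1) / 8) * c) • 1)
    -- (iii)
    (hiii : ∀ j, Tm j ∘ₗ (D (j + 1) : H (j + 1) →ₗ[ℝ] H (j + 1))
        = (((n : ℝ) + 2 * (j : ℝ) - 2) / ((n : ℝ) + 2 * (j : ℝ)))
          • ((D j : H j →ₗ[ℝ] H j) ∘ₗ Tm j))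
    -- (iv)
    (hiv : ∀ j, (D (j + 1) : H (j + 1) →ₗ[ℝ] H (j + 1)) ∘ₗ Tp j
        = (((n : ℝ) + 2 * (j : ℝ) - 2) / ((n : ℝ) + 2 * (j : ℝ)))
          • (Tp j ∘ₗ (D j : H j →ₗ[ℝ] H j)))
    -- the operators `B(s;j)`
    (B : ∀ _ j : ℕ, Module.End ℝ (H j))
    (hB : ∀ s j, B s j
      = D j * D j - ((((n : ℝ) + 2 * (s : ℝ) - 2) ^ 2 / ((n : ℝ) + 2 * (j : ℝ) - 2) ^ 2) : ℝ)
        • (Δ j - (((s : ℝ) * ((n : ℝ) + (s : ℝ) - 2) - (n : ℝ) * ((n : ℝ) - 1) / 8) * c) • 1)) :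
    (∀ s j, Tp j ∘ₗ (B s j : H j →ₗ[ℝ] H j)
        = ((((n : ℝ) + 2 * (j : ℝ)) ^ 2 / ((n : ℝ) + 2 * (j : ℝ) - 2) ^ 2) : ℝ)
          • ((B s (j + 1) : H (j + 1) →ₗ[ℝ] H (j + 1)) ∘ₗ Tp j))
    ∧ (∀ j, (Tp j ∘ₗ Tm j : Module.End ℝ (H (j + 1))) = -B (j + 1) (j + 1))
    ∧ B 0 0 = 0
    ∧ (∀ j, (Tm j ∘ₗ Tp j : Module.End ℝ (H j))
        = -(((((n : ℝ) + 2 * (j : ℝ) - 2) ^ 2 / ((n : ℝ) + 2 * (j : ℝ)) ^ 2) : ℝ)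
          • B (j + 1) j)) :=
  key_intertwining_relations_general n hn c H D Δ Tp Tm hi0 hi hii hiv B hB
end

section
/- In the abstract factorization setting, for any φ ∈ ker T_s^- one has T_s^- T_{s+1}^- T_s^+ φ = 0; consequently, for all ψ in H_{s-1}, the inner product ⟨T_s^+ φ, T_s^+ T_{s-1}^+ ψ⟩ = 0, i.e., T_s^+(ker T_s^-) is orthogonal to T_s^+ T_{s-1}^+(H_{s-1}). -/
/-!
`T_{s+1}^- T_s^+` is a multiple of `B(s+1;s)`, and the intertwining relation shows that
`B(s+1;s)` preserves `ker T_s^-`; hence `T_s^- T_{s+1}^- T_s^+` kills `ker T_s^-`. Moving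
`T_s^+` and then `T_{s-1}^+` across the inner product by adjointness turns
`⟪T_s^+ φ, T_s^+ T_{s-1}^+ ψ⟫` into `⟪T_s^- T_{s+1}^- T_s^+ φ, ψ⟫ = 0`.
-/

open scoped RealInnerProductSpace

namespace LinearMap

section Kernel

variable {R M N P : Type*} [CommSemiring R]
  [AddCommMonoid M] [AddCommMonoid N] [AddCommMonoid P] [Module R M] [Module R N] [Module R P]

theorem apply_eq_zero_of_comp_eq_comp {f : M →ₗ[R] N} {g : Module.End R M}
    {h : Module.End R N} (hfg : f ∘ₗ g = h ∘ₗ f) {x : M} (hx : f x = 0) : f (g x) = 0 := by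
  rw [← comp_apply, hfg, comp_apply, hx, map_zero]

theorem apply_apply_apply_eq_zero_of_comp_eq_smul {f : M →ₗ[R] N} {u : P →ₗ[R] M}
    {v : M →ₗ[R] P} {g : Module.End R M} {h : Module.End R N} {a : R}
    (huv : u ∘ₗ v = a • g) (hfg : f ∘ₗ g = h ∘ₗ f) {x : M} (hx : f x = 0) :
    f (u (v x)) = 0 := by
  rw [← comp_apply u v, huv, smul_apply, map_smul, apply_eq_zero_of_comp_eq_comp hfg hx,
    smul_zero]

end Kernel

section Adjoint

variable {E F G : Type*} [NormedAddCommGroup E] [InnerProductSpace ℝ E]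
  [NormedAddCommGroup F] [InnerProductSpace ℝ F] [NormedAddCommGroup G] [InnerProductSpace ℝ G]

theorem real_inner_apply_apply_eq_of_adjoint {f : E →ₗ[ℝ] F} {f' : F →ₗ[ℝ] E}
    {g : E →ₗ[ℝ] G} {g' : G →ₗ[ℝ] E}
    (hf : ∀ x y, ⟪f x, y⟫ = ⟪x, f' y⟫) (hg : ∀ x y, ⟪g x, y⟫ = ⟪x, g' y⟫) (x : E) (y : F) :
    ⟪g x, g (f' y)⟫ = ⟪f (g' (g x)), y⟫ := by
  rw [real_inner_comm, hg, real_inner_comm, hf]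

end Adjoint

end LinearMap

theorem orthogonality_step_general (n s : ℕ)
    (HA HB HC : Type*)
    [NormedAddCommGroup HA] [InnerProductSpace ℝ HA]
    [NormedAddCommGroup HB] [InnerProductSpace ℝ HB]
    [NormedAddCommGroup HC] [InnerProductSpace ℝ HC]
    (Tm1 : HB →ₗ[ℝ] HA) (Tm2 : HC →ₗ[ℝ] HB)
    (Tp1 : HB →ₗ[ℝ] HC) (Tp0 : HA →ₗ[ℝ] HB)
    (Bss : Module.End ℝ HB)
    (Bsm : Module.End ℝ HA)
    -- `(T_s^+)^* T_s^+ = -((n+2s-2)²/(n+2s)²) B(s+1;s)`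
    (h1 : (Tm2 ∘ₗ Tp1 : Module.End ℝ HB)
      = -(((((n : ℝ) + 2 * (s : ℝ) - 2) ^ 2 / ((n : ℝ) + 2 * (s : ℝ)) ^ 2) : ℝ) • Bss))
    -- intertwining `T_s^- B(s+1;s) = ((n+2s-4)²/(n+2s)²) B(s+1;s-1) T_s^-`
    (h2 : Tm1 ∘ₗ (Bss : HB →ₗ[ℝ] HB)
      = ((((n : ℝ) + 2 * (s : ℝ) - 4) ^ 2 / ((n : ℝ) + 2 * (s : ℝ)) ^ 2) : ℝ)
        • ((Bsm : HA →ₗ[ℝ] HA) ∘ₗ Tm1))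
    -- adjointness `T_{s-1}^+ = (T_s^-)^*` and `T_s^+ = (T_{s+1}^-)^*`
    (hadj0 : ∀ (x : HB) (y : HA), ⟪Tm1 x, y⟫ = ⟪x, Tp0 y⟫)
    (hadj1 : ∀ (x : HB) (y : HC), ⟪Tp1 x, y⟫ = ⟪x, Tm2 y⟫)
    (φ : HB) (hφ : Tm1 φ = 0) :
    Tm1 (Tm2 (Tp1 φ)) = 0 ∧ ∀ ψ : HA, ⟪Tp1 φ, Tp1 (Tp0 ψ)⟫ = 0 := by
  have hkill : Tm1 (Tm2 (Tp1 φ)) = 0 :=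
    LinearMap.apply_apply_apply_eq_zero_of_comp_eq_smul (h1.trans (neg_smul _ _).symm)
      (h2.trans (LinearMap.smul_comp _ _ _).symm) hφ
  refine ⟨hkill, fun ψ => ?_⟩
  rw [LinearMap.real_inner_apply_apply_eq_of_adjoint hadj0 hadj1, hkill, inner_zero_left]

/-- The orthogonality step in the grading decomposition (Theorem `thm:7`).
With `HA = Γ(S_{s-1})`, `HB = Γ(S_s)`, `HC = Γ(S_{s+1})`, the operators
`Tm1 = T_s^-`, `Tm2 = T_{s+1}^-`, `Tp1 = T_s^+`, `Tp0 = T_{s-1}^+`, and the operators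
`Bss = B(s+1;s)`, `Bsm = B(s+1;s-1)` built from `D`, `Δ`, one has for `φ ∈ ker T_s^-`:
`T_s^- T_{s+1}^- T_s^+ φ = 0`, hence `⟪T_s^+ φ, T_s^+ T_{s-1}^+ ψ⟫ = 0` for all `ψ`,
i.e. `T_s^+(ker T_s^-) ⊥ T_s^+ T_{s-1}^+(H_{s-1})`. -/
theorem orthogonality_step (n s : ℕ) (hn : 3 ≤ n) (c : ℝ)
    (HA HB HC : Type*)
    [NormedAddCommGroup HA] [InnerProductSpace ℝ HA]
    [NormedAddCommGroup HB] [InnerProductSpace ℝ HB]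
    [NormedAddCommGroup HC] [InnerProductSpace ℝ HC]
    (Ds ΔS : Module.End ℝ HB) (Dm Δm : Module.End ℝ HA)
    (Tm1 : HB →ₗ[ℝ] HA) (Tm2 : HC →ₗ[ℝ] HB)
    (Tp1 : HB →ₗ[ℝ] HC) (Tp0 : HA →ₗ[ℝ] HB)
    (Bss : Module.End ℝ HB)
    (hBss : Bss = Ds * Ds - ((((n : ℝ) + 2 * (s : ℝ)) ^ 2 / ((n : ℝ) + 2 * (s : ℝ) - 2) ^ 2) : ℝ)
      • (ΔS - ((((s : ℝ) + 1) * ((n : ℝ) + (s : ℝ) - 1) - (n : ℝ) * ((n : ℝ) - 1) / 8) * c) • 1))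
    (Bsm : Module.End ℝ HA)
    (hBsm : Bsm = Dm * Dm - ((((n : ℝ) + 2 * (s : ℝ)) ^ 2 / ((n : ℝ) + 2 * (s : ℝ) - 4) ^ 2) : ℝ)
      • (Δm - ((((s : ℝ) + 1) * ((n : ℝ) + (s : ℝ) - 1) - (n : ℝ) * ((n : ℝ) - 1) / 8) * c) • 1))
    -- `(T_s^+)^* T_s^+ = -((n+2s-2)²/(n+2s)²) B(s+1;s)`
    (h1 : (Tm2 ∘ₗ Tp1 : Module.End ℝ HB)
      = -(((((n : ℝ) + 2 * (s : ℝ) - 2) ^ 2 / ((n : ℝ) + 2 * (s : ℝ)) ^ 2) : ℝ) • Bss))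
    -- intertwining `T_s^- B(s+1;s) = ((n+2s-4)²/(n+2s)²) B(s+1;s-1) T_s^-`
    (h2 : Tm1 ∘ₗ (Bss : HB →ₗ[ℝ] HB)
      = ((((n : ℝ) + 2 * (s : ℝ) - 4) ^ 2 / ((n : ℝ) + 2 * (s : ℝ)) ^ 2) : ℝ)
        • ((Bsm : HA →ₗ[ℝ] HA) ∘ₗ Tm1))
    -- adjointness `T_{s-1}^+ = (T_s^-)^*` and `T_s^+ = (T_{s+1}^-)^*`
    (hadj0 : ∀ (x : HB) (y : HA), ⟪Tm1 x, y⟫ = ⟪x, Tp0 y⟫)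
    (hadj1 : ∀ (x : HB) (y : HC), ⟪Tp1 x, y⟫ = ⟪x, Tm2 y⟫)
    (φ : HB) (hφ : Tm1 φ = 0) :
    Tm1 (Tm2 (Tp1 φ)) = 0 ∧ ∀ ψ : HA, ⟪Tp1 φ, Tp1 (Tp0 ψ)⟫ = 0 :=
  orthogonality_step_general n s HA HB HC Tm1 Tm2 Tp1 Tp0 Bss Bsm h1 h2 hadj0 hadj1 φ hφ
end

section
/- In the abstract factorization setting, for any φ_s ∈ ker T_s^- one has B(s;j)(T_{j-1}^+ ⋯ T_s^+ φ_s) = 0; that is, W_s := T_{j-1}^+ ⋯ T_s^+(ker T_s^-) is contained in ker B(s;j). -/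
variable {H : ℕ → Type*}

/-- The composite `T_{a+k-1}^+ ∘ ⋯ ∘ T_a^+ : H a → H (a+k)` of twistor operators. -/
def iterTp [∀ j, AddCommGroup (H j)] [∀ j, Module ℝ (H j)]
    (Tp : ∀ j, H j →ₗ[ℝ] H (j + 1)) (a : ℕ) : ∀ k, H a →ₗ[ℝ] H (a + k)
  | 0 => LinearMap.id
  | k + 1 => Tp (a + k) ∘ₗ iterTp Tp a k

/-! Since `T_j^+` intertwines `B(s;j)` and `B(s;j+1)` up to a scalar, it maps `ker B(s;j)` into
`ker B(s;j+1)`; starting from `ker T_s^- ⊆ ker B(s;s)`, induction on `j` gives the claim. -/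

theorem LinearMap.apply_eq_zero_of_comp_eq_smul_comp {R M N : Type*} [CommSemiring R]
    [AddCommMonoid M] [AddCommMonoid N] [Module R M] [Module R N]
    {f : M →ₗ[R] N} {A : Module.End R M} {A' : Module.End R N} {r : R}
    (h : A' ∘ₗ f = r • (f ∘ₗ A)) {x : M} (hx : A x = 0) : A' (f x) = 0 := by
  have hfx : A' (f x) = r • f (A x) := LinearMap.congr_fun h x
  rw [hfx, hx, map_zero, smul_zero]

theorem iterTp_apply_eq_zero [∀ j, AddCommGroup (H j)] [∀ j, Module ℝ (H j)]
    {Tp : ∀ j, H j →ₗ[ℝ] H (j + 1)} {A : ∀ j, Module.End ℝ (H j)} {r : ℕ → ℝ}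
    (h : ∀ j, A (j + 1) ∘ₗ Tp j = r j • (Tp j ∘ₗ A j)) {a : ℕ} {x : H a} (hx : A a x = 0) :
    ∀ k, A (a + k) (iterTp Tp a k x) = 0
  | 0 => hx
  | k + 1 =>
    LinearMap.apply_eq_zero_of_comp_eq_smul_comp (h (a + k)) (iterTp_apply_eq_zero h hx k)

theorem W_s_in_ker_B_general (n : ℕ)
    [∀ j, NormedAddCommGroup (H j)] [∀ j, InnerProductSpace ℝ (H j)]
    (Tp : ∀ j, H j →ₗ[ℝ] H (j + 1))
    (Tm : ∀ j, H (j + 1) →ₗ[ℝ] H j)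
    (B : ∀ _ j : ℕ, Module.End ℝ (H j))
    -- intertwining `B(s;j+1) T_j^+ = ((n+2j-2)²/(n+2j)²) T_j^+ B(s;j)`
    (hint : ∀ s j, (B s (j + 1) : H (j + 1) →ₗ[ℝ] H (j + 1)) ∘ₗ Tp j
      = ((((n : ℝ) + 2 * (j : ℝ) - 2) ^ 2 / ((n : ℝ) + 2 * (j : ℝ)) ^ 2) : ℝ)
        • (Tp j ∘ₗ (B s j : H j →ₗ[ℝ] H j)))
    -- `B(s;s) φ = -(T_s^-)^* T_s^- φ = 0` on `ker T_s^-`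
    (hker : ∀ s (φ : H (s + 1)), Tm s φ = 0 → B (s + 1) (s + 1) φ = 0)
    -- `B(0;0) = 0` since `T_0^- = 0`
    (h00 : ∀ φ : H 0, B 0 0 φ = 0) :
    (∀ s k (φ : H (s + 1)), Tm s φ = 0 →
      B (s + 1) (s + 1 + k) (iterTp Tp (s + 1) k φ) = 0)
    ∧ (∀ k (φ : H 0), B 0 (0 + k) (iterTp Tp 0 k φ) = 0) :=
  ⟨fun s k φ hφ => iterTp_apply_eq_zero (hint (s + 1)) (hker s φ hφ) k,
    fun k φ => iterTp_apply_eq_zero (hint 0) (h00 φ) k⟩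

/-- The inclusion `W_s ⊆ ker B(s;j)` in Theorem `thm:7`: for `φ_s ∈ ker T_s^-`
(for `s = 0`, `T_0^- = 0` so the kernel is everything), one has
`B(s;j)(T_{j-1}^+ ⋯ T_s^+ φ_s) = 0`. -/
theorem W_s_in_ker_B (n : ℕ) (hn : 3 ≤ n) (c : ℝ)
    [∀ j, NormedAddCommGroup (H j)] [∀ j, InnerProductSpace ℝ (H j)]
    (D Δ : ∀ j, Module.End ℝ (H j))
    (Tp : ∀ j, H j →ₗ[ℝ] H (j + 1))
    (Tm : ∀ j, H (j + 1) →ₗ[ℝ] H j)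
    (B : ∀ _ j : ℕ, Module.End ℝ (H j))
    (hB : ∀ s j, B s j
      = D j * D j - ((((n : ℝ) + 2 * (s : ℝ) - 2) ^ 2 / ((n : ℝ) + 2 * (j : ℝ) - 2) ^ 2) : ℝ)
        • (Δ j - (((s : ℝ) * ((n : ℝ) + (s : ℝ) - 2) - (n : ℝ) * ((n : ℝ) - 1) / 8) * c) • 1))
    -- intertwining `B(s;j+1) T_j^+ = ((n+2j-2)²/(n+2j)²) T_j^+ B(s;j)`
    (hint : ∀ s j, (B s (j + 1) : H (j + 1) →ₗ[ℝ] H (j + 1)) ∘ₗ Tp j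
      = ((((n : ℝ) + 2 * (j : ℝ) - 2) ^ 2 / ((n : ℝ) + 2 * (j : ℝ)) ^ 2) : ℝ)
        • (Tp j ∘ₗ (B s j : H j →ₗ[ℝ] H j)))
    -- `B(s;s) φ = -(T_s^-)^* T_s^- φ = 0` on `ker T_s^-`
    (hker : ∀ s (φ : H (s + 1)), Tm s φ = 0 → B (s + 1) (s + 1) φ = 0)
    -- `B(0;0) = 0` since `T_0^- = 0`
    (h00 : ∀ φ : H 0, B 0 0 φ = 0) :
    (∀ s k (φ : H (s + 1)), Tm s φ = 0 →
      B (s + 1) (s + 1 + k) (iterTp Tp (s + 1) k φ) = 0)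
    ∧ (∀ k (φ : H 0), B 0 (0 + k) (iterTp Tp 0 k φ) = 0) :=
  W_s_in_ker_B_general n Tp Tm B hint hker h00
end

section
/- The eigenvalue of D_j² on the Spin(n+1)-isotypic component V_j(k,s)' inside L²(S^n, S_j) is ((n+2s-2)²/(n+2j-2)²)·(j+k+n/2)². Abstract version: suppose Δ_j acts on V_j(k,s)' by the scalar (j+k+n/2)² + s(s+n-2) - n(n-1)/8, the Weitzenböck identities of Corollary 2.5 (with c=1) hold, T_j^+ maps V_j(k,s)' onto V_{j+1}(k-1,s)' for k≥1 and kills V_j(0,s)', and ker T_{j+1}^- = ⊕_k V_{j+1}(k,j+1)'. Then by induction on j, D_j² acts on V_j(k,s)' by ((n+2s-2)²/(n+2j-2)²)(j+k+n/2)². -/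
open scoped RealInnerProductSpace

/-! Induction on `j`. On a component `V_{j+1}(k,s)'` with `s ≤ j`, the intertwining relation
`D_{j+1} T_j^+ = ((n+2j-2)/(n+2j)) T_j^+ D_j` and the surjectivity of `T_j^+` from `V_j(k+1,s)'`
transport the eigenvalue up from level `j`. The new component `s = j+1` (and every component for
`j = 0`) lies in `ker T_j^-`, so there the Weitzenböck formula makes `D²` equal to `Δ` minus a
constant, and the eigenvalue of `Δ` collapses to `(j+k+n/2)²`. -/

noncomputable def diracSqEigenvalue (n j k s : ℕ) : ℝ :=
  ((n : ℝ) + 2 * s - 2) ^ 2 / ((n : ℝ) + 2 * j - 2) ^ 2 * ((j : ℝ) + k + n / 2) ^ 2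

theorem diracSqEigenvalue_self {n j : ℕ} (h : n + 2 * j ≠ 2) (k : ℕ) :
    diracSqEigenvalue n j k j = ((j : ℝ) + k + n / 2) ^ 2 := by
  have hne : (n : ℝ) + 2 * j - 2 ≠ 0 := by
    rw [sub_ne_zero]
    exact_mod_cast h
  rw [diracSqEigenvalue, div_self (pow_ne_zero 2 hne), one_mul]

theorem diracSqEigenvalue_succ {n j : ℕ} (h : 2 < n + 2 * j) (k s : ℕ) :
    (((n : ℝ) + 2 * j - 2) / (n + 2 * j)) ^ 2 * diracSqEigenvalue n j (k + 1) s
      = diracSqEigenvalue n (j + 1) k s := by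
  have h' : (2 : ℝ) < n + 2 * j := by exact_mod_cast h
  have hne : (n : ℝ) + 2 * j - 2 ≠ 0 := by linarith
  have hne' : (n : ℝ) + 2 * j ≠ 0 := by linarith
  have hden : (n : ℝ) + 2 * ((j + 1 : ℕ) : ℝ) - 2 = n + 2 * j := by push_cast; ring
  have hshift : (j : ℝ) + ((k + 1 : ℕ) : ℝ) = ((j + 1 : ℕ) : ℝ) + k := by push_cast; ring
  rw [diracSqEigenvalue, diracSqEigenvalue, hden, hshift]
  field_simp

section Weitzenbock

variable {R M N : Type*} [CommRing R] [AddCommGroup M] [Module R M] [AddCommGroup N] [Module R N]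

theorem apply_eq_sub_smul_of_eq_add_add_smul_one {Δ P A : Module.End R M} {c μ : R}
    (h : Δ = P + A + c • 1) {φ : M} (hΔ : Δ φ = μ • φ) (hA : A φ = 0) :
    P φ = (μ - c) • φ := by
  rw [h] at hΔ
  simp only [LinearMap.add_apply, LinearMap.smul_apply, Module.End.one_apply, hA,
    add_zero] at hΔ
  rw [sub_smul, ← hΔ, add_sub_cancel_right]

theorem mul_self_apply_eq_of_comp_eq_smul_comp {D : Module.End R M} {D' : Module.End R N}
    {T : M →ₗ[R] N} {a μ : R} (h : D' ∘ₗ T = a • (T ∘ₗ D)) {ψ : M}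
    (hψ : (D * D) ψ = μ • ψ) : (D' * D') (T ψ) = (a ^ 2 * μ) • T ψ := by
  have hDT (x : M) : D' (T x) = a • T (D x) := LinearMap.congr_fun h x
  calc (D' * D') (T ψ) = a • D' (T (D ψ)) := by rw [Module.End.mul_apply, hDT, map_smul]
    _ = (a ^ 2) • T ((D * D) ψ) := by rw [hDT, smul_smul, sq]; rfl
    _ = (a ^ 2 * μ) • T ψ := by rw [hψ, map_smul, smul_smul]

end Weitzenbock

theorem dirac_squared_eigenvalue_sphere_general (n : ℕ) (hn : 3 ≤ n)
    (H : ℕ → Type*) [∀ j, NormedAddCommGroup (H j)] [∀ j, InnerProductSpace ℝ (H j)]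
    (D Δ : ∀ j, Module.End ℝ (H j))
    (Tp : ∀ j, H j →ₗ[ℝ] H (j + 1))
    (Tm : ∀ j, H (j + 1) →ₗ[ℝ] H j)
    (V : ∀ j, ℕ → ℕ → Submodule ℝ (H j))
    -- the Laplacian eigenvalue on `V_j(k,s)'` (Lemma `lem-delta`)
    (hΔ : ∀ j k s, s ≤ j → ∀ φ ∈ V j k s,
      Δ j φ = ((((j : ℝ) + (k : ℝ) + (n : ℝ) / 2) ^ 2
        + (s : ℝ) * ((s : ℝ) + (n : ℝ) - 2) - (n : ℝ) * ((n : ℝ) - 1) / 8) : ℝ) • φ)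
    -- Weitzenböck formulas of Corollary 2.5 with `c = 1` (using `T_0^- = 0`)
    (hi0 : Δ 0 = D 0 * D 0 + (-((n : ℝ) * ((n : ℝ) - 1) / 8)) • 1)
    (hi : ∀ j, Δ (j + 1) = D (j + 1) * D (j + 1)
        + (Tp j ∘ₗ Tm j : Module.End ℝ (H (j + 1)))
        + ((((j : ℝ) + 1) * ((n : ℝ) + (j : ℝ) - 1) - (n : ℝ) * ((n : ℝ) - 1) / 8) : ℝ) • 1)
    (hiv : ∀ j, (D (j + 1) : H (j + 1) →ₗ[ℝ] H (j + 1)) ∘ₗ Tp j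
        = (((n : ℝ) + 2 * (j : ℝ) - 2) / ((n : ℝ) + 2 * (j : ℝ)))
          • (Tp j ∘ₗ (D j : H j →ₗ[ℝ] H j)))
    -- `T_j^+` maps `V_j(k+1,s)'` onto `V_{j+1}(k,s)'` …
    (hsurj : ∀ j k s, s ≤ j → ∀ ψ ∈ V (j + 1) k s, ∃ φ ∈ V j (k + 1) s, Tp j φ = ψ)
    -- `ker T_{j+1}^- = ⊕_k V_{j+1}(k, j+1)'`
    (hker : ∀ j, LinearMap.ker (Tm j) = ⨆ k, V (j + 1) k (j + 1)) :
    ∀ j k s, s ≤ j → ∀ φ ∈ V j k s,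
      (D j * D j) φ
        = (((((n : ℝ) + 2 * (s : ℝ) - 2) ^ 2 / ((n : ℝ) + 2 * (j : ℝ) - 2) ^ 2)
            * ((j : ℝ) + (k : ℝ) + (n : ℝ) / 2) ^ 2) : ℝ) • φ := by
  suffices ∀ j k s, s ≤ j → ∀ φ ∈ V j k s, (D j * D j) φ = diracSqEigenvalue n j k s • φ from
    this
  intro j
  induction j with
  | zero =>
    rintro k s hs φ hφ
    obtain rfl : s = 0 := Nat.le_zero.mp hs
    rw [diracSqEigenvalue_self (by omega)]
    convert apply_eq_sub_smul_of_eq_add_add_smul_one (P := D 0 * D 0) (A := 0)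
      (by rw [hi0, add_zero]) (hΔ 0 k 0 le_rfl φ hφ) rfl using 2
    push_cast
    ring
  | succ j ih =>
    rintro k s hs φ hφ
    rcases Nat.le_succ_iff.mp hs with hs | rfl
    · obtain ⟨ψ, hψ, rfl⟩ := hsurj j k s hs φ hφ
      rw [← diracSqEigenvalue_succ (by omega)]
      exact mul_self_apply_eq_of_comp_eq_smul_comp (hiv j) (ih (k + 1) s hs ψ hψ)
    · have hTm : Tm j φ = 0 := by
        rw [← LinearMap.mem_ker, hker j]
        exact Submodule.mem_iSup_of_mem k hφ
      rw [diracSqEigenvalue_self (by omega)]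
      convert apply_eq_sub_smul_of_eq_add_add_smul_one (hi j) (hΔ _ k _ le_rfl φ hφ)
        (by simp [hTm]) using 2
      push_cast
      ring

/-- The eigenvalue of `D_j²` on the `Spin(n+1)`-isotypic component `V_j(k,s)'` of
`L²(S^n, S_j)` is `((n+2s-2)²/(n+2j-2)²)(j+k+n/2)²`, derived by induction on `j` from the
Weitzenböck identities (with curvature `c = 1`), the Laplacian eigenvalues, the
surjectivity of `T_j^+ : V_j(k+1,s)' → V_{j+1}(k,s)'`, its vanishing on `V_j(0,s)'`,
and `ker T_{j+1}^- = ⊕_k V_{j+1}(k,j+1)'`. -/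
theorem dirac_squared_eigenvalue_sphere (n : ℕ) (hn : 3 ≤ n)
    (H : ℕ → Type*) [∀ j, NormedAddCommGroup (H j)] [∀ j, InnerProductSpace ℝ (H j)]
    (D Δ : ∀ j, Module.End ℝ (H j))
    (Tp : ∀ j, H j →ₗ[ℝ] H (j + 1))
    (Tm : ∀ j, H (j + 1) →ₗ[ℝ] H j)
    (V : ∀ j, ℕ → ℕ → Submodule ℝ (H j))
    -- the Laplacian eigenvalue on `V_j(k,s)'` (Lemma `lem-delta`)
    (hΔ : ∀ j k s, s ≤ j → ∀ φ ∈ V j k s,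
      Δ j φ = ((((j : ℝ) + (k : ℝ) + (n : ℝ) / 2) ^ 2
        + (s : ℝ) * ((s : ℝ) + (n : ℝ) - 2) - (n : ℝ) * ((n : ℝ) - 1) / 8) : ℝ) • φ)
    -- adjointness `T_j^+ = (T_{j+1}^-)^*`
    (hv : ∀ j (x : H j) (y : H (j + 1)), ⟪Tp j x, y⟫ = ⟪x, Tm j y⟫)
    -- Weitzenböck formulas of Corollary 2.5 with `c = 1` (using `T_0^- = 0`)
    (hi0 : Δ 0 = D 0 * D 0 + (-((n : ℝ) * ((n : ℝ) - 1) / 8)) • 1)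
    (hi : ∀ j, Δ (j + 1) = D (j + 1) * D (j + 1)
        + (Tp j ∘ₗ Tm j : Module.End ℝ (H (j + 1)))
        + ((((j : ℝ) + 1) * ((n : ℝ) + (j : ℝ) - 1) - (n : ℝ) * ((n : ℝ) - 1) / 8) : ℝ) • 1)
    (hii : ∀ j, Δ j = (Tm j ∘ₗ Tp j : Module.End ℝ (H j))
        + ((((n : ℝ) + 2 * (j : ℝ) - 2) ^ 2 / ((n : ℝ) + 2 * (j : ℝ)) ^ 2) : ℝ) • (D j * D j)
        + ((((j : ℝ) + 1) * ((n : ℝ) + (j : ℝ) - 1) - (n : ℝ) * ((n : ℝ) - 1) / 8) : ℝ) • 1)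
    (hiv : ∀ j, (D (j + 1) : H (j + 1) →ₗ[ℝ] H (j + 1)) ∘ₗ Tp j
        = (((n : ℝ) + 2 * (j : ℝ) - 2) / ((n : ℝ) + 2 * (j : ℝ)))
          • (Tp j ∘ₗ (D j : H j →ₗ[ℝ] H j)))
    -- `T_j^+` maps `V_j(k+1,s)'` onto `V_{j+1}(k,s)'` …
    (hsurj : ∀ j k s, s ≤ j → ∀ ψ ∈ V (j + 1) k s, ∃ φ ∈ V j (k + 1) s, Tp j φ = ψ)
    -- … and kills `V_j(0,s)'`
    (hkill : ∀ j s, s ≤ j → ∀ φ ∈ V j 0 s, Tp j φ = 0)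
    -- `ker T_{j+1}^- = ⊕_k V_{j+1}(k, j+1)'`
    (hker : ∀ j, LinearMap.ker (Tm j) = ⨆ k, V (j + 1) k (j + 1)) :
    ∀ j k s, s ≤ j → ∀ φ ∈ V j k s,
      (D j * D j) φ
        = (((((n : ℝ) + 2 * (s : ℝ) - 2) ^ 2 / ((n : ℝ) + 2 * (j : ℝ) - 2) ^ 2)
            * ((j : ℝ) + (k : ℝ) + (n : ℝ) / 2) ^ 2) : ℝ) • φ :=
  dirac_squared_eigenvalue_sphere_general n hn H D Δ Tp Tm V hΔ hi0 hi hiv hsurj hker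
end

section
/- Let T_j^+, T_j^-, Δ_j be operators on inner product spaces H_j (j = 0, 1, 2, ...) satisfying, for a constant c: (i) Δ_j = (j+1)(T_j^+)*T_j^+ - (n+j-3)(T_j^-)*T_j^- + 2j(n+j-2)c, (ii) (T_{j+1}^-)*T_{j+1}^- = ((j+1)(n+2j-2)/((n+j-2)(n+2j))) T_j^+(T_j^+)*, (iii) Δ_{j+1}T_j^+ = T_j^+ Δ_j, (iv) T_0^- = 0, (v) Δ_0 = (T_0^+)*T_0^+, and (vi) T_{j+1}^- is surjective onto H_j (or: post-composition by T_{j+1}^- can be cancelled). Then with a(s;j) = (j-s+1)(n+j+s-2)/((j+1)(n+2j-2)) and b(s;j) = j(n+j-1)+s(n+s-3), the product ∏_{s=0}^{j} ((T_j^+)*T_j^+ - a(s;j)(Δ_j - b(s;j)c)) = 0 on H_j for every j. -/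
/-!
Eliminating `(T_{j+1}^-)^* T_{j+1}^-` between the Weitzenböck formula (i) and (ii) expresses
`(j+2) (T_{j+1}^+)^* T_{j+1}^+` through `Δ_{j+1}` and `T_j^+ (T_j^+)^*`. Together with (iii)
this gives the intertwining `T_j^+ F_j(s) = k(j) F_{j+1}(s) T_j^+` for the factors
`F_j(s) = (T_j^+)^* T_j^+ - a(s;j) (Δ_j - b(s;j) c)`, while the one new factor is
`k(j) F_{j+1}(j+1) = T_j^+ (T_j^+)^*`. Hence `k(j)^{j+2} ∏_{s ≤ j+1} F_{j+1}(s)` equals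
`T_j^+ (∏_{s ≤ j} F_j(s)) (T_j^+)^*`, which vanishes by induction on `j`; the base case is (v).
-/

open scoped RealInnerProductSpace

theorem LinearMap.comp_list_prod_map_eq_smul {R M N ι : Type*} [CommSemiring R]
    [AddCommMonoid M] [Module R M] [AddCommMonoid N] [Module R N]
    (T : M →ₗ[R] N) (P : ι → Module.End R M) (Q : ι → Module.End R N) (k : R)
    (h : ∀ i, T ∘ₗ P i = k • (Q i ∘ₗ T)) (l : List ι) :
    T ∘ₗ (l.map P).prod = k ^ l.length • ((l.map Q).prod ∘ₗ T) := by
  induction l with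
  | nil => simp [Module.End.one_eq_id]
  | cons i l ih =>
    simp only [List.map_cons, List.prod_cons, List.length_cons, Module.End.mul_eq_comp, pow_succ']
    rw [← comp_assoc, h, smul_comp, comp_assoc, ih, comp_smul, smul_smul, comp_assoc]

namespace FactorizationSym

open LinearMap Module

noncomputable def a (n j s : ℝ) : ℝ := (j - s + 1) * (n + j + s - 2) / ((j + 1) * (n + 2 * j - 2))

noncomputable def b (n j s : ℝ) : ℝ := j * (n + j - 1) + s * (n + s - 3)

noncomputable def k (n j : ℝ) : ℝ := (j + 2) * (n + 2 * j) / ((j + 1) * (n + 2 * j - 2))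

noncomputable def factor {V : Type*} [AddCommGroup V] [Module ℝ V] (n c j s : ℝ)
    (A Δ : End ℝ V) : End ℝ V :=
  A - a n j s • (Δ - (b n j s * c) • 1)

theorem a_add_one (n j s : ℝ) :
    a n (j + 1) s = (j - s + 2) * (n + j + s - 1) / ((j + 2) * (n + 2 * j)) := by
  unfold a; ring

theorem b_add_one (n j s : ℝ) : b n (j + 1) s = (j + 1) * (n + j) + s * (n + s - 3) := by
  unfold b; ring

theorem k_ne_zero {n j : ℝ} (hn : 2 < n) (hj : 0 ≤ j) : k n j ≠ 0 := by
  unfold k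
  have : 0 < n + 2 * j - 2 := by linarith
  positivity

theorem smul_eq_of_weitzenbock {V : Type*} [AddCommGroup V] [Module ℝ V] {n j c : ℝ}
    (h : n + j - 2 ≠ 0) {A B C Δ : End ℝ V}
    (hΔ : Δ = (j + 2) • A - (n + j - 2) • B + (2 * (j + 1) * (n + j - 1) * c) • 1)
    (hB : B = ((j + 1) * (n + 2 * j - 2) / ((n + j - 2) * (n + 2 * j))) • C) :
    (j + 2) • A = Δ + ((j + 1) * (n + 2 * j - 2) / (n + 2 * j)) • C
      - (2 * (j + 1) * (n + j - 1) * c) • 1 := by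
  rw [hΔ, hB, smul_smul, mul_div_assoc', mul_div_mul_left _ _ h]
  abel

section Step

variable {V W : Type*} [AddCommGroup V] [Module ℝ V] [AddCommGroup W] [Module ℝ W]
  {n c j : ℝ} {T : V →ₗ[ℝ] W} {T' : W →ₗ[ℝ] V} {Δ : End ℝ V} {Δ' A' : End ℝ W}

theorem eq_inv_smul_of_weitzenbock (hj : 0 ≤ j)
    (hrec : (j + 2) • A' = Δ' + ((j + 1) * (n + 2 * j - 2) / (n + 2 * j)) • (T ∘ₗ T')
      - (2 * (j + 1) * (n + j - 1) * c) • 1) :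
    A' = (j + 2)⁻¹ • (Δ' + ((j + 1) * (n + 2 * j - 2) / (n + 2 * j)) • (T ∘ₗ T')
      - (2 * (j + 1) * (n + j - 1) * c) • 1) := by
  rw [← hrec, smul_smul, inv_mul_cancel₀ (by positivity), one_smul]

theorem k_smul_factor_self (hn : 2 < n) (hj : 0 ≤ j)
    (hrec : (j + 2) • A' = Δ' + ((j + 1) * (n + 2 * j - 2) / (n + 2 * j)) • (T ∘ₗ T')
      - (2 * (j + 1) * (n + j - 1) * c) • 1) :
    k n j • factor n c (j + 1) (j + 1) A' Δ' = T ∘ₗ T' := by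
  have : n + j * 2 ≠ 0 := by linarith
  have : n + j * 2 - 2 ≠ 0 := by linarith
  have : j + 1 ≠ 0 := by linarith
  have : j + 2 ≠ 0 := by linarith
  rw [eq_inv_smul_of_weitzenbock hj hrec, factor, a_add_one, b_add_one, k]
  match_scalars <;> field_simp <;> ring

theorem comp_factor_eq_smul_factor_comp (hn : 2 < n) (hj : 0 ≤ j)
    (hrec : (j + 2) • A' = Δ' + ((j + 1) * (n + 2 * j - 2) / (n + 2 * j)) • (T ∘ₗ T')
      - (2 * (j + 1) * (n + j - 1) * c) • 1)
    (hΔ : Δ' ∘ₗ T = T ∘ₗ Δ) (s : ℝ) :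
    T ∘ₗ factor n c j s (T' ∘ₗ T) Δ = k n j • (factor n c (j + 1) s A' Δ' ∘ₗ T) := by
  have : n + j * 2 ≠ 0 := by linarith
  have : n + j * 2 - 2 ≠ 0 := by linarith
  have : j + 1 ≠ 0 := by linarith
  have : j + 2 ≠ 0 := by linarith
  rw [eq_inv_smul_of_weitzenbock hj hrec, factor, factor, a_add_one, b_add_one, a, b, k]
  simp only [sub_comp, add_comp, smul_comp, comp_sub, comp_smul, comp_assoc,
    End.one_eq_id, id_comp, comp_id, hΔ]
  match_scalars <;> field_simp <;> ring

end Step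

theorem list_prod_factor_eq_zero {n c : ℝ} (hn : 2 < n) {V : ℕ → Type*}
    [∀ j, AddCommGroup (V j)] [∀ j, Module ℝ (V j)] (Δ : ∀ j, End ℝ (V j))
    (T : ∀ j, V j →ₗ[ℝ] V (j + 1)) (T' : ∀ j, V (j + 1) →ₗ[ℝ] V j)
    (hrec : ∀ j : ℕ, ((j : ℝ) + 2) • (T' (j + 1) ∘ₗ T (j + 1)) = Δ (j + 1)
      + (((j : ℝ) + 1) * (n + 2 * j - 2) / (n + 2 * j)) • (T j ∘ₗ T' j)
      - (2 * ((j : ℝ) + 1) * (n + j - 1) * c) • 1)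
    (hΔ : ∀ j, Δ (j + 1) ∘ₗ T j = T j ∘ₗ Δ j) (hΔ₀ : Δ 0 = T' 0 ∘ₗ T 0) (j : ℕ) :
    ((List.range (j + 1)).map fun s : ℕ => factor n c j s (T' j ∘ₗ T j) (Δ j)).prod = 0 := by
  induction j with
  | zero =>
    have : n - 2 ≠ 0 := by linarith
    simp [factor, a, b, hΔ₀, this]
  | succ j ih =>
    have hj : (0 : ℝ) ≤ j := j.cast_nonneg
    have hk := k_ne_zero hn hj
    have hcomp := LinearMap.comp_list_prod_map_eq_smul (T j) _
      (fun s : ℕ => factor n c (j + 1) s (T' (j + 1) ∘ₗ T (j + 1)) (Δ (j + 1))) (k n j)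
      (fun s => comp_factor_eq_smul_factor_comp hn hj (hrec j) (hΔ j) s) (List.range (j + 1))
    rw [ih, comp_zero, eq_comm, smul_eq_zero, or_iff_right (pow_ne_zero _ hk)] at hcomp
    have : k n j • ((List.range (j + 2)).map fun s : ℕ =>
        factor n c (j + 1) s (T' (j + 1) ∘ₗ T (j + 1)) (Δ (j + 1))).prod = 0 := by
      rw [List.range_succ, List.map_append, List.prod_append, List.map_singleton,
        List.prod_singleton, ← mul_smul_comm, Nat.cast_succ, k_smul_factor_self hn hj (hrec j),
        End.mul_eq_comp, ← comp_assoc, hcomp, zero_comp]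
    push_cast
    exact (smul_eq_zero.mp this).resolve_left hk

end FactorizationSym

theorem factorization_sym_general (n : ℕ) (hn : 3 ≤ n) (c : ℝ)
    (H : ℕ → Type*) [∀ j, NormedAddCommGroup (H j)] [∀ j, InnerProductSpace ℝ (H j)]
    (Δ : ∀ j, Module.End ℝ (H j))
    (Tp : ∀ j, H j →ₗ[ℝ] H (j + 1)) (TpS : ∀ j, H (j + 1) →ₗ[ℝ] H j)
    (Tm : ∀ j, H (j + 1) →ₗ[ℝ] H j) (TmS : ∀ j, H j →ₗ[ℝ] H (j + 1))
    -- (i) at `j + 1`:  `Δ_j = (j+1)(T_j^+)^*T_j^+ - (n+j-3)(T_j^-)^*T_j^- + 2j(n+j-2)c`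
    (hi : ∀ j : ℕ, Δ (j + 1)
        = (((j : ℝ) + 2)) • (TpS (j + 1) ∘ₗ Tp (j + 1) : Module.End ℝ (H (j + 1)))
          - ((n : ℝ) + (j : ℝ) - 2) • (TmS j ∘ₗ Tm j : Module.End ℝ (H (j + 1)))
          + (2 * ((j : ℝ) + 1) * ((n : ℝ) + (j : ℝ) - 1) * c) • 1)
    -- (ii)
    (hii : ∀ j : ℕ, (TmS j ∘ₗ Tm j : Module.End ℝ (H (j + 1)))
        = (((j : ℝ) + 1) * ((n : ℝ) + 2 * (j : ℝ) - 2)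
            / (((n : ℝ) + (j : ℝ) - 2) * ((n : ℝ) + 2 * (j : ℝ))))
          • (Tp j ∘ₗ TpS j : Module.End ℝ (H (j + 1))))
    -- (iii)
    (hiii : ∀ j, (Δ (j + 1) : H (j + 1) →ₗ[ℝ] H (j + 1)) ∘ₗ Tp j
        = Tp j ∘ₗ (Δ j : H j →ₗ[ℝ] H j))
    -- (iv), (v): `T_0^- = 0` and `Δ_0 = (T_0^+)^* T_0^+`
    (hv : Δ 0 = (TpS 0 ∘ₗ Tp 0 : Module.End ℝ (H 0))) :
    ∀ j, ((List.range (j + 1)).map (fun s =>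
      (TpS j ∘ₗ Tp j : Module.End ℝ (H j))
        - (((j : ℝ) - (s : ℝ) + 1) * ((n : ℝ) + (j : ℝ) + (s : ℝ) - 2)
            / (((j : ℝ) + 1) * ((n : ℝ) + 2 * (j : ℝ) - 2)))
          • (Δ j - (((j : ℝ) * ((n : ℝ) + (j : ℝ) - 1)
              + (s : ℝ) * ((n : ℝ) + (s : ℝ) - 3)) * c) • 1))).prod
      = 0 := by
  have hn' : (3 : ℝ) ≤ n := by exact_mod_cast hn
  intro j
  -- `s` is real, so `List.range (j + 1)` is coerced to a `List ℝ` through the list monad.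
  rw [bind_pure_comp, List.map_eq_map, List.map_map]
  refine FactorizationSym.list_prod_factor_eq_zero (by linarith) Δ Tp TpS
    (fun i => FactorizationSym.smul_eq_of_weitzenbock ?_ (hi i) (hii i)) hiii hv j
  have : (0 : ℝ) ≤ i := i.cast_nonneg
  linarith

/-- Factorization formula for trace-free symmetric tensor fields (Theorem `thm:fact2`),
abstract form.  With `a(s;j) = (j-s+1)(n+j+s-2)/((j+1)(n+2j-2))` and
`b(s;j) = j(n+j-1)+s(n+s-3)`, the hypotheses (i)–(vi) imply
`∏_{s=0}^{j} ((T_j^+)^*T_j^+ - a(s;j)(Δ_j - b(s;j)c)) = 0` on `H_j`. -/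
theorem factorization_sym (n : ℕ) (hn : 3 ≤ n) (c : ℝ)
    (H : ℕ → Type*) [∀ j, NormedAddCommGroup (H j)] [∀ j, InnerProductSpace ℝ (H j)]
    (Δ : ∀ j, Module.End ℝ (H j))
    (Tp : ∀ j, H j →ₗ[ℝ] H (j + 1)) (TpS : ∀ j, H (j + 1) →ₗ[ℝ] H j)
    (Tm : ∀ j, H (j + 1) →ₗ[ℝ] H j) (TmS : ∀ j, H j →ₗ[ℝ] H (j + 1))
    -- `TpS j = (T_j^+)^*`, `TmS j = (T_{j+1}^-)^*`
    (hTpS : ∀ j (x : H j) (y : H (j + 1)), ⟪Tp j x, y⟫ = ⟪x, TpS j y⟫)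
    (hTmS : ∀ j (x : H (j + 1)) (y : H j), ⟪Tm j x, y⟫ = ⟪x, TmS j y⟫)
    -- (i) at `j + 1`:  `Δ_j = (j+1)(T_j^+)^*T_j^+ - (n+j-3)(T_j^-)^*T_j^- + 2j(n+j-2)c`
    (hi : ∀ j : ℕ, Δ (j + 1)
        = (((j : ℝ) + 2)) • (TpS (j + 1) ∘ₗ Tp (j + 1) : Module.End ℝ (H (j + 1)))
          - ((n : ℝ) + (j : ℝ) - 2) • (TmS j ∘ₗ Tm j : Module.End ℝ (H (j + 1)))
          + (2 * ((j : ℝ) + 1) * ((n : ℝ) + (j : ℝ) - 1) * c) • 1)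
    -- (ii)
    (hii : ∀ j : ℕ, (TmS j ∘ₗ Tm j : Module.End ℝ (H (j + 1)))
        = (((j : ℝ) + 1) * ((n : ℝ) + 2 * (j : ℝ) - 2)
            / (((n : ℝ) + (j : ℝ) - 2) * ((n : ℝ) + 2 * (j : ℝ))))
          • (Tp j ∘ₗ TpS j : Module.End ℝ (H (j + 1))))
    -- (iii)
    (hiii : ∀ j, (Δ (j + 1) : H (j + 1) →ₗ[ℝ] H (j + 1)) ∘ₗ Tp j
        = Tp j ∘ₗ (Δ j : H j →ₗ[ℝ] H j))
    -- (iv), (v): `T_0^- = 0` and `Δ_0 = (T_0^+)^* T_0^+`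
    (hv : Δ 0 = (TpS 0 ∘ₗ Tp 0 : Module.End ℝ (H 0)))
    -- (vi): `T_{j+1}^-` is surjective
    (hvi : ∀ j, Function.Surjective (Tm j)) :
    ∀ j, ((List.range (j + 1)).map (fun s =>
      (TpS j ∘ₗ Tp j : Module.End ℝ (H j))
        - (((j : ℝ) - (s : ℝ) + 1) * ((n : ℝ) + (j : ℝ) + (s : ℝ) - 2)
            / (((j : ℝ) + 1) * ((n : ℝ) + 2 * (j : ℝ) - 2)))
          • (Δ j - (((j : ℝ) * ((n : ℝ) + (j : ℝ) - 1)
              + (s : ℝ) * ((n : ℝ) + (s : ℝ) - 3)) * c) • 1))).prod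
      = 0 :=
  factorization_sym_general n hn c H Δ Tp TpS Tm TmS hi hii hiii hv
end

section
/- The eigenvalue of (T_j^+)*T_j^+ on V_j(k,s) ⊂ L²(S^n, Sym₀^j) is k(n+k+2j-1)(j-s+1)(n+j+s-2)/((j+1)(n+2j-2)). Abstract inductive version: given the Weitzenböck relations of Proposition 4.4 with c = 1, the Laplacian eigenvalue (j+k)(n+k+j-1)+s(s+n-3) on V_j(k,s), the intertwining T_j^+ : V_j(k,s) → V_{j+1}(k-1,s) for k ≥ 1, and ker T_{j+1}^- = ⊕_k V_{j+1}(k,j+1), prove by induction on j that (T_j^+)*T_j^+ acts on V_j(k,s) by the stated scalar. -/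
open scoped RealInnerProductSpace

/-! Induction on `j`. Applied to `φ ∈ V_{j+1}(k,s)`, the first Weitzenböck relation expresses
`(T_{j+1}^+)^* T_{j+1}^+ φ` through the Laplacian eigenvalue and `(T_{j+1}^-)^* T_{j+1}^- φ`.
If `s ≤ j`, write `φ = T_j^+ ψ` with `ψ ∈ V_j(k+1,s)`; then `T_j^+ (T_j^+)^* φ` is the inductive
eigenvalue for `(k+1,s)` times `φ`, and the second relation turns this into `(T_{j+1}^-)^* T_{j+1}^- φ`.
If `s = j+1`, then `T_{j+1}^- φ = 0`; since the closed formula vanishes at `s = j+1`, both cases give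
the same recursion, which the closed formula solves. -/

noncomputable def twistorEigenvalue (n j k s : ℝ) : ℝ :=
  k * (n + k + 2 * j - 1) * (j - s + 1) * (n + j + s - 2) / ((j + 1) * (n + 2 * j - 2))

def laplaceEigenvalue (n j k s : ℝ) : ℝ :=
  (j + k) * (n + k + j - 1) + s * (s + n - 3)

noncomputable def weitzenbockConstant (n j : ℝ) : ℝ :=
  (j + 1) * (n + 2 * j - 2) / ((n + j - 2) * (n + 2 * j))

theorem laplaceEigenvalue_zero_eq_twistorEigenvalue {n : ℝ} (hn : n ≠ 2) (k : ℝ) :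
    laplaceEigenvalue n 0 k 0 = twistorEigenvalue n 0 k 0 := by
  have : n - 2 ≠ 0 := sub_ne_zero.mpr hn
  rw [laplaceEigenvalue, twistorEigenvalue, mul_div_assoc]
  simp [this]

theorem twistorEigenvalue_of_eq_add_one (n j k : ℝ) : twistorEigenvalue n j k (j + 1) = 0 := by
  simp [twistorEigenvalue]

theorem twistorEigenvalue_add_one {n j : ℝ} (hn : 2 < n) (hj : 0 ≤ j) (k s : ℝ) :
    twistorEigenvalue n (j + 1) k s
      = (laplaceEigenvalue n (j + 1) k s
          + (n + j - 2) * (weitzenbockConstant n j * twistorEigenvalue n j (k + 1) s)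
          - 2 * (j + 1) * (n + j - 1)) / (j + 2) := by
  have : n + j - 2 ≠ 0 := by linarith
  have : n + 2 * j ≠ 0 := by linarith
  have : n + 2 * j - 2 ≠ 0 := by linarith
  have : n + 2 * (j + 1) - 2 ≠ 0 := by linarith
  have : j + 1 ≠ 0 := by linarith
  have : j + 1 + 1 ≠ 0 := by linarith
  have : j + 2 ≠ 0 := by linarith
  unfold laplaceEigenvalue twistorEigenvalue weitzenbockConstant
  field_simp
  ring

theorem Module.End.apply_eq_smul_of_weitzenbock {R M : Type*} [Field R] [AddCommGroup M]
    [Module R M] {A D B : Module.End R M} {a b c d m : R} {φ : M} (ha : a ≠ 0)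
    (hW : a • A = D + b • B - c • 1) (hD : D φ = d • φ) (hB : B φ = m • φ) :
    A φ = ((d + b * m - c) / a) • φ := by
  have h := LinearMap.congr_fun hW φ
  simp only [LinearMap.smul_apply, LinearMap.add_apply, LinearMap.sub_apply,
    Module.End.one_apply, hD, hB, smul_smul, ← add_smul, ← sub_smul] at h
  rw [div_eq_inv_mul, ← smul_smul, ← h, smul_smul, inv_mul_cancel₀ ha, one_smul]

theorem sym_twistor_eigenvalue_sphere_general (n : ℕ) (hn : 3 ≤ n)
    (H : ℕ → Type*) [∀ j, NormedAddCommGroup (H j)] [∀ j, InnerProductSpace ℝ (H j)]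
    (Δ : ∀ j, Module.End ℝ (H j))
    (Tp : ∀ j, H j →ₗ[ℝ] H (j + 1)) (TpS : ∀ j, H (j + 1) →ₗ[ℝ] H j)
    (Tm : ∀ j, H (j + 1) →ₗ[ℝ] H j) (TmS : ∀ j, H j →ₗ[ℝ] H (j + 1))
    (V : ∀ j, ℕ → ℕ → Submodule ℝ (H j))
    -- Laplacian eigenvalue on `V_j(k,s)` (Freudenthal)
    (hΔ : ∀ j k s, s ≤ j → ∀ φ ∈ V j k s,
      Δ j φ = ((((j : ℝ) + (k : ℝ)) * ((n : ℝ) + (k : ℝ) + (j : ℝ) - 1)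
        + (s : ℝ) * ((s : ℝ) + (n : ℝ) - 3)) : ℝ) • φ)
    -- Weitzenböck relations of Proposition 4.4 with `c = 1`
    (hW1 : ∀ j : ℕ, ((j : ℝ) + 2) • (TpS (j + 1) ∘ₗ Tp (j + 1) : Module.End ℝ (H (j + 1)))
        = Δ (j + 1) + ((n : ℝ) + (j : ℝ) - 2) • (TmS j ∘ₗ Tm j : Module.End ℝ (H (j + 1)))
          - (2 * ((j : ℝ) + 1) * ((n : ℝ) + (j : ℝ) - 1)) • 1)
    (hW2 : ∀ j, (TmS j ∘ₗ Tm j : Module.End ℝ (H (j + 1)))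
        = (((j : ℝ) + 1) * ((n : ℝ) + 2 * (j : ℝ) - 2)
            / (((n : ℝ) + (j : ℝ) - 2) * ((n : ℝ) + 2 * (j : ℝ))))
          • (Tp j ∘ₗ TpS j : Module.End ℝ (H (j + 1))))
    -- base case `Δ_0 = (T_0^+)^* T_0^+`
    (h0 : Δ 0 = (TpS 0 ∘ₗ Tp 0 : Module.End ℝ (H 0)))
    -- `T_j^+` maps `V_j(k+1,s)` onto `V_{j+1}(k,s)` and kills `V_j(0,s)`
    (hsurj : ∀ j k s, s ≤ j → ∀ ψ ∈ V (j + 1) k s, ∃ φ ∈ V j (k + 1) s, Tp j φ = ψ)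
    -- `ker T_{j+1}^- = ⊕_k V_{j+1}(k, j+1)`
    (hker : ∀ j, LinearMap.ker (Tm j) = ⨆ k, V (j + 1) k (j + 1)) :
    ∀ j k s, s ≤ j → ∀ φ ∈ V j k s,
      (TpS j ∘ₗ Tp j) φ
        = (((k : ℝ) * ((n : ℝ) + (k : ℝ) + 2 * (j : ℝ) - 1) * ((j : ℝ) - (s : ℝ) + 1)
            * ((n : ℝ) + (j : ℝ) + (s : ℝ) - 2)
            / (((j : ℝ) + 1) * ((n : ℝ) + 2 * (j : ℝ) - 2))) : ℝ) • φ := by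
  have hn : (2 : ℝ) < n := by exact_mod_cast hn
  intro j
  induction j with
  | zero =>
    rintro k s hs φ hφ
    obtain rfl : s = 0 := Nat.le_zero.mp hs
    rw [← h0, hΔ 0 k 0 le_rfl φ hφ]
    show laplaceEigenvalue n (0 : ℕ) k (0 : ℕ) • φ = twistorEigenvalue n (0 : ℕ) k (0 : ℕ) • φ
    rw [Nat.cast_zero, laplaceEigenvalue_zero_eq_twistorEigenvalue hn.ne']
  | succ j ih =>
    intro k s hs φ hφ
    have hTmTm : (TmS j ∘ₗ Tm j) φ
        = (weitzenbockConstant n j * twistorEigenvalue n j (k + 1) s) • φ := by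
      rcases hs.lt_or_eq with hs | rfl
      · obtain ⟨ψ, hψ, rfl⟩ := hsurj j k s (Nat.lt_succ_iff.mp hs) φ hφ
        have hIH := ih (k + 1) s (Nat.lt_succ_iff.mp hs) ψ hψ
        rw [hW2, LinearMap.smul_apply, LinearMap.comp_apply, ← LinearMap.comp_apply (TpS j), hIH,
          map_smul, smul_smul, Nat.cast_succ]
        rfl
      · have hTm : Tm j φ = 0 := by
          rw [← LinearMap.mem_ker, hker]
          exact Submodule.mem_iSup_of_mem k hφ
        rw [LinearMap.comp_apply, hTm, map_zero, Nat.cast_succ, twistorEigenvalue_of_eq_add_one,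
          mul_zero, zero_smul]
    rw [Module.End.apply_eq_smul_of_weitzenbock (by positivity) (hW1 j) (hΔ _ k s hs φ hφ) hTmTm]
    show _ = twistorEigenvalue n (j + 1 : ℕ) k s • φ
    rw [Nat.cast_succ, twistorEigenvalue_add_one hn j.cast_nonneg]
    rfl

/-- The eigenvalue of `(T_j^+)^* T_j^+` on the `SO(n+1)`-isotypic component `V_j(k,s)`
of `L²(S^n, Sym₀^j)` is `k(n+k+2j-1)(j-s+1)(n+j+s-2)/((j+1)(n+2j-2))`, derived by
induction on `j` from the Weitzenböck relations of Proposition 4.4 (with `c = 1`), the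
Laplacian eigenvalues, the intertwining `T_j^+ : V_j(k+1,s) → V_{j+1}(k,s)`, and
`ker T_{j+1}^- = ⊕_k V_{j+1}(k, j+1)`. -/
theorem sym_twistor_eigenvalue_sphere (n : ℕ) (hn : 3 ≤ n)
    (H : ℕ → Type*) [∀ j, NormedAddCommGroup (H j)] [∀ j, InnerProductSpace ℝ (H j)]
    (Δ : ∀ j, Module.End ℝ (H j))
    (Tp : ∀ j, H j →ₗ[ℝ] H (j + 1)) (TpS : ∀ j, H (j + 1) →ₗ[ℝ] H j)
    (Tm : ∀ j, H (j + 1) →ₗ[ℝ] H j) (TmS : ∀ j, H j →ₗ[ℝ] H (j + 1))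
    -- `TpS j` is the adjoint `(T_j^+)^*` and `TmS j` is the adjoint `(T_{j+1}^-)^*`
    (hTpS : ∀ j (x : H j) (y : H (j + 1)), ⟪Tp j x, y⟫ = ⟪x, TpS j y⟫)
    (hTmS : ∀ j (x : H (j + 1)) (y : H j), ⟪Tm j x, y⟫ = ⟪x, TmS j y⟫)
    (V : ∀ j, ℕ → ℕ → Submodule ℝ (H j))
    -- Laplacian eigenvalue on `V_j(k,s)` (Freudenthal)
    (hΔ : ∀ j k s, s ≤ j → ∀ φ ∈ V j k s,
      Δ j φ = ((((j : ℝ) + (k : ℝ)) * ((n : ℝ) + (k : ℝ) + (j : ℝ) - 1)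
        + (s : ℝ) * ((s : ℝ) + (n : ℝ) - 3)) : ℝ) • φ)
    -- Weitzenböck relations of Proposition 4.4 with `c = 1`
    (hW1 : ∀ j : ℕ, ((j : ℝ) + 2) • (TpS (j + 1) ∘ₗ Tp (j + 1) : Module.End ℝ (H (j + 1)))
        = Δ (j + 1) + ((n : ℝ) + (j : ℝ) - 2) • (TmS j ∘ₗ Tm j : Module.End ℝ (H (j + 1)))
          - (2 * ((j : ℝ) + 1) * ((n : ℝ) + (j : ℝ) - 1)) • 1)
    (hW2 : ∀ j, (TmS j ∘ₗ Tm j : Module.End ℝ (H (j + 1)))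
        = (((j : ℝ) + 1) * ((n : ℝ) + 2 * (j : ℝ) - 2)
            / (((n : ℝ) + (j : ℝ) - 2) * ((n : ℝ) + 2 * (j : ℝ))))
          • (Tp j ∘ₗ TpS j : Module.End ℝ (H (j + 1))))
    -- base case `Δ_0 = (T_0^+)^* T_0^+`
    (h0 : Δ 0 = (TpS 0 ∘ₗ Tp 0 : Module.End ℝ (H 0)))
    -- the Laplacians intertwine with `T_j^+`
    (hcomm : ∀ j, (Δ (j + 1) : H (j + 1) →ₗ[ℝ] H (j + 1)) ∘ₗ Tp j
        = Tp j ∘ₗ (Δ j : H j →ₗ[ℝ] H j))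
    -- `T_j^+` maps `V_j(k+1,s)` onto `V_{j+1}(k,s)` and kills `V_j(0,s)`
    (hsurj : ∀ j k s, s ≤ j → ∀ ψ ∈ V (j + 1) k s, ∃ φ ∈ V j (k + 1) s, Tp j φ = ψ)
    (hkill : ∀ j s, s ≤ j → ∀ φ ∈ V j 0 s, Tp j φ = 0)
    -- `ker T_{j+1}^- = ⊕_k V_{j+1}(k, j+1)`
    (hker : ∀ j, LinearMap.ker (Tm j) = ⨆ k, V (j + 1) k (j + 1)) :
    ∀ j k s, s ≤ j → ∀ φ ∈ V j k s,
      (TpS j ∘ₗ Tp j) φ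
        = (((k : ℝ) * ((n : ℝ) + (k : ℝ) + 2 * (j : ℝ) - 1) * ((j : ℝ) - (s : ℝ) + 1)
            * ((n : ℝ) + (j : ℝ) + (s : ℝ) - 2)
            / (((j : ℝ) + 1) * ((n : ℝ) + 2 * (j : ℝ) - 2))) : ℝ) • φ :=
  sym_twistor_eigenvalue_sphere_general n hn H Δ Tp TpS Tm TmS V hΔ hW1 hW2 h0 hsurj hker
end

section
/- Let H_j (0 ≤ j ≤ N) be inner product spaces with operators T_j^+ : H_j → H_{j+1}, T_j^- : H_j → H_{j-1}, Δ_j : H_j → H_j and a constant c > 0, satisfying: Δ_j = ((n-2j)²/(4(n-2j-1)))(T_j^+)*T_j^+ + ((n-2j+2)²/(4(n-2j+1)))(T_j^-)*T_j^- + (n(n+1)/8)c, together with T_{j+1}^+T_j^+ = 0, T_{j-1}^-T_j^- = 0 and T_{j-1}^+ = (T_j^-)*. Suppose each H_j is finite-dimensional (or the operators admit spectral decompositions). Then H_j admits an orthogonal decomposition H_j = Image(T_{j-1}^+) ⊕ Image(T_{j+1}^-) ⊕ ker(Δ_j - (n(n+1)/8)c), and moreover ker T_j^+ = Image(T_{j-1}^+)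 ⊕ ker(Δ_j - (n(n+1)/8)c) and ker T_j^- = Image(T_{j+1}^-) ⊕ ker(Δ_j - (n(n+1)/8)c). -/
open scoped RealInnerProductSpace

/-!
For the three-term piece `H_{j-1} → H_j → H_{j+1}` of the complex, write `d = T_{j-1}^+`,
`d' = T_j^+` with adjoints `δ`, `δ'`. Adjointness gives `(range d)ᗮ = ker δ` and
`(range δ')ᗮ = ker d'`, and `d' ∘ d = 0` makes `range d ⟂ range δ'`. The Laplacian identity
with positive coefficients shows `ker (Δ_j - n(n+1)c/8) = ker d' ⊓ ker δ`, the orthogonal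
complement of `range d ⊔ range δ'`; in finite dimension every statement is then the
orthogonal decomposition of `H_j`, or of `ker d' = (range δ')ᗮ ⊇ range d`, along a subspace.
-/

section

variable {E F G : Type*}
  [NormedAddCommGroup E] [InnerProductSpace ℝ E]
  [NormedAddCommGroup F] [InnerProductSpace ℝ F]
  [NormedAddCommGroup G] [InnerProductSpace ℝ G]

theorem orthogonal_range_eq_ker_adjoint {d : E →ₗ[ℝ] F} {δ : F →ₗ[ℝ] E}
    (hd : ∀ x y, ⟪d x, y⟫ = ⟪x, δ y⟫) : (LinearMap.range d)ᗮ = LinearMap.ker δ := by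
  ext y
  simp only [Submodule.mem_orthogonal, LinearMap.mem_range, forall_exists_index,
    forall_apply_eq_imp_iff, LinearMap.mem_ker, hd]
  exact ⟨fun h => inner_self_eq_zero.mp (h _), fun h x => by rw [h, inner_zero_right]⟩

theorem orthogonal_range_adjoint_eq_ker {d' : F →ₗ[ℝ] G} {δ' : G →ₗ[ℝ] F}
    (hd' : ∀ x y, ⟪d' x, y⟫ = ⟪x, δ' y⟫) : (LinearMap.range δ')ᗮ = LinearMap.ker d' :=
  orthogonal_range_eq_ker_adjoint fun y x => by
    rw [real_inner_comm, ← hd', real_inner_comm]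

theorem ker_smul_comp_add_smul_comp {d : E →ₗ[ℝ] F} {δ : F →ₗ[ℝ] E}
    {d' : F →ₗ[ℝ] G} {δ' : G →ₗ[ℝ] F}
    (hd : ∀ x y, ⟪d x, y⟫ = ⟪x, δ y⟫) (hd' : ∀ x y, ⟪d' x, y⟫ = ⟪x, δ' y⟫)
    {a b : ℝ} (ha : 0 < a) (hb : 0 < b) :
    LinearMap.ker (a • (δ' ∘ₗ d') + b • (d ∘ₗ δ))
      = LinearMap.ker d' ⊓ LinearMap.ker δ := by
  ext x
  simp only [LinearMap.mem_ker, Submodule.mem_inf]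
  have hquad : ⟪(a • (δ' ∘ₗ d') + b • (d ∘ₗ δ)) x, x⟫ = a * ‖d' x‖ ^ 2 + b * ‖δ x‖ ^ 2 := by
    simp only [LinearMap.add_apply, LinearMap.smul_apply, LinearMap.comp_apply, inner_add_left,
      real_inner_smul_left]
    rw [real_inner_comm, ← hd', real_inner_comm, hd, real_inner_self_eq_norm_sq,
      real_inner_self_eq_norm_sq]
  refine ⟨fun hx => ?_, fun ⟨h₁, h₂⟩ => by simp [h₁, h₂]⟩
  rw [hx, inner_zero_left] at hquad
  have h₁ : ‖d' x‖ ^ 2 = 0 := by nlinarith [sq_nonneg ‖d' x‖, sq_nonneg ‖δ x‖]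
  have h₂ : ‖δ x‖ ^ 2 = 0 := by nlinarith [sq_nonneg ‖d' x‖, sq_nonneg ‖δ x‖]
  exact ⟨norm_eq_zero.mp (pow_eq_zero_iff two_ne_zero |>.mp h₁),
    norm_eq_zero.mp (pow_eq_zero_iff two_ne_zero |>.mp h₂)⟩

variable {d : E →ₗ[ℝ] F} {δ : F →ₗ[ℝ] E} {d' : F →ₗ[ℝ] G} {δ' : G →ₗ[ℝ] F}

theorem range_isOrtho_range_of_comp_eq_zero (hd' : ∀ x y, ⟪d' x, y⟫ = ⟪x, δ' y⟫)
    (hdd : d' ∘ₗ d = 0) : LinearMap.range d ⟂ LinearMap.range δ' := by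
  rw [Submodule.isOrtho_iff_le, orthogonal_range_adjoint_eq_ker hd']
  exact LinearMap.range_le_ker_iff.mpr hdd

theorem ker_inf_ker_eq_orthogonal_sup_range (hd : ∀ x y, ⟪d x, y⟫ = ⟪x, δ y⟫)
    (hd' : ∀ x y, ⟪d' x, y⟫ = ⟪x, δ' y⟫) :
    LinearMap.ker d' ⊓ LinearMap.ker δ = (LinearMap.range d ⊔ LinearMap.range δ')ᗮ := by
  rw [← Submodule.inf_orthogonal, orthogonal_range_eq_ker_adjoint hd,
    orthogonal_range_adjoint_eq_ker hd', inf_comm]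

theorem range_isOrtho_ker_inf_ker (hd : ∀ x y, ⟪d x, y⟫ = ⟪x, δ y⟫) :
    LinearMap.range d ⟂ LinearMap.ker d' ⊓ LinearMap.ker δ := by
  refine (Submodule.isOrtho_iff_le.mpr ?_).symm
  rw [orthogonal_range_eq_ker_adjoint hd]
  exact inf_le_right

theorem range_adjoint_isOrtho_ker_inf_ker (hd' : ∀ x y, ⟪d' x, y⟫ = ⟪x, δ' y⟫) :
    LinearMap.range δ' ⟂ LinearMap.ker d' ⊓ LinearMap.ker δ := by
  refine (Submodule.isOrtho_iff_le.mpr ?_).symm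
  rw [orthogonal_range_adjoint_eq_ker hd']
  exact inf_le_left

variable [FiniteDimensional ℝ F]

theorem range_sup_range_sup_ker_inf_ker (hd : ∀ x y, ⟪d x, y⟫ = ⟪x, δ y⟫)
    (hd' : ∀ x y, ⟪d' x, y⟫ = ⟪x, δ' y⟫) :
    LinearMap.range d ⊔ LinearMap.range δ' ⊔ (LinearMap.ker d' ⊓ LinearMap.ker δ) = ⊤ := by
  rw [ker_inf_ker_eq_orthogonal_sup_range hd hd']
  exact Submodule.sup_orthogonal_of_hasOrthogonalProjection

theorem ker_eq_range_sup_ker_inf_ker (hd : ∀ x y, ⟪d x, y⟫ = ⟪x, δ y⟫) (hdd : d' ∘ₗ d = 0) :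
    LinearMap.ker d' = LinearMap.range d ⊔ (LinearMap.ker d' ⊓ LinearMap.ker δ) := by
  have hle : LinearMap.range d ≤ LinearMap.ker d' := LinearMap.range_le_ker_iff.mpr hdd
  rw [← orthogonal_range_eq_ker_adjoint hd, inf_comm]
  exact (Submodule.sup_orthogonal_inf_of_hasOrthogonalProjection hle).symm

theorem ker_adjoint_eq_range_sup_ker_inf_ker (hd : ∀ x y, ⟪d x, y⟫ = ⟪x, δ y⟫)
    (hd' : ∀ x y, ⟪d' x, y⟫ = ⟪x, δ' y⟫) (hdd : d' ∘ₗ d = 0) :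
    LinearMap.ker δ = LinearMap.range δ' ⊔ (LinearMap.ker d' ⊓ LinearMap.ker δ) := by
  have hle : LinearMap.range δ' ≤ LinearMap.ker δ := by
    rw [← orthogonal_range_eq_ker_adjoint hd, ← Submodule.isOrtho_iff_le]
    exact (range_isOrtho_range_of_comp_eq_zero hd' hdd).symm
  rw [← orthogonal_range_adjoint_eq_ker hd']
  exact (Submodule.sup_orthogonal_inf_of_hasOrthogonalProjection hle).symm

end

theorem hodge_de_rham_decomposition_general (n N : ℕ) (c : ℝ) (hN : 2 * N + 1 < n)
    (H : ℕ → Type*) [∀ j, NormedAddCommGroup (H j)] [∀ j, InnerProductSpace ℝ (H j)]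
    [∀ j, FiniteDimensional ℝ (H j)]
    (Tp : ∀ j, H j →ₗ[ℝ] H (j + 1)) (Tm : ∀ j, H (j + 1) →ₗ[ℝ] H j)
    (Δ : ∀ j, Module.End ℝ (H j))
    -- adjointness `T_j^+ = (T_{j+1}^-)^*`
    (hadj : ∀ j (x : H j) (y : H (j + 1)), ⟪Tp j x, y⟫ = ⟪x, Tm j y⟫)
    -- `d² = 0`-type relations
    (hdd : ∀ j, Tp (j + 1) ∘ₗ Tp j = 0)
    -- the Laplacian identity at `1 ≤ j ≤ N`
    (hΔ : ∀ j : ℕ, j + 1 ≤ N → Δ (j + 1)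
        = (((n : ℝ) - 2 * ((j : ℝ) + 1)) ^ 2 / (4 * ((n : ℝ) - 2 * ((j : ℝ) + 1) - 1)))
            • (Tm (j + 1) ∘ₗ Tp (j + 1) : Module.End ℝ (H (j + 1)))
          + (((n : ℝ) - 2 * ((j : ℝ) + 1) + 2) ^ 2 / (4 * ((n : ℝ) - 2 * ((j : ℝ) + 1) + 1)))
            • (Tp j ∘ₗ Tm j : Module.End ℝ (H (j + 1)))
          + ((n : ℝ) * ((n : ℝ) + 1) / 8 * c) • 1) :
    ∀ j : ℕ, j + 1 ≤ N →
      (LinearMap.range (Tp j) ⊔ LinearMap.range (Tm (j + 1))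
          ⊔ LinearMap.ker (Δ (j + 1) - ((n : ℝ) * ((n : ℝ) + 1) / 8 * c) • 1) = ⊤)
      ∧ (∀ x ∈ LinearMap.range (Tp j), ∀ y ∈ LinearMap.range (Tm (j + 1)), ⟪x, y⟫ = 0)
      ∧ (∀ x ∈ LinearMap.range (Tp j),
          ∀ y ∈ LinearMap.ker (Δ (j + 1) - ((n : ℝ) * ((n : ℝ) + 1) / 8 * c) • 1), ⟪x, y⟫ = 0)
      ∧ (∀ x ∈ LinearMap.range (Tm (j + 1)),
          ∀ y ∈ LinearMap.ker (Δ (j + 1) - ((n : ℝ) * ((n : ℝ) + 1) / 8 * c) • 1), ⟪x, y⟫ = 0)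
      ∧ LinearMap.ker (Tp (j + 1))
          = LinearMap.range (Tp j)
            ⊔ LinearMap.ker (Δ (j + 1) - ((n : ℝ) * ((n : ℝ) + 1) / 8 * c) • 1)
      ∧ LinearMap.ker (Tm j)
          = LinearMap.range (Tm (j + 1))
            ⊔ LinearMap.ker (Δ (j + 1) - ((n : ℝ) * ((n : ℝ) + 1) / 8 * c) • 1) := by
  intro j hj
  have hn : 2 * (j : ℝ) + 3 < n := by exact_mod_cast (by omega : 2 * j + 3 < n)
  have hker : LinearMap.ker (Δ (j + 1) - ((n : ℝ) * ((n : ℝ) + 1) / 8 * c) • 1)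
      = LinearMap.ker (Tp (j + 1)) ⊓ LinearMap.ker (Tm j) := by
    rw [hΔ j hj, add_sub_cancel_right]
    exact ker_smul_comp_add_smul_comp (hadj j) (hadj (j + 1))
      (div_pos (pow_pos (by linarith) 2) (by linarith))
      (div_pos (pow_pos (by linarith) 2) (by linarith))
  rw [hker]
  exact ⟨range_sup_range_sup_ker_inf_ker (hadj j) (hadj (j + 1)),
    Submodule.isOrtho_iff_inner_eq.mp
      (range_isOrtho_range_of_comp_eq_zero (hadj (j + 1)) (hdd j)),
    Submodule.isOrtho_iff_inner_eq.mp (range_isOrtho_ker_inf_ker (hadj j)),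
    Submodule.isOrtho_iff_inner_eq.mp (range_adjoint_isOrtho_ker_inf_ker (hadj (j + 1))),
    ker_eq_range_sup_ker_inf_ker (hadj j) (hdd j),
    ker_adjoint_eq_range_sup_ker_inf_ker (hadj j) (hadj (j + 1)) (hdd j)⟩

/-- Hodge–de Rham decomposition for spinor fields coupled with differential forms
(Proposition 6.4), abstract form.  Finite-dimensional inner product spaces `H j`
(`0 ≤ j ≤ N`, with `n > 2N + 1` so all denominators are positive) with operators
`Tp j = T_j^+`, `Tm j = T_{j+1}^-` (`T_j^+ = (T_{j+1}^-)^*`), `Δ j` and a constant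
`c > 0` satisfying `Δ_j = ((n-2j)²/(4(n-2j-1)))(T_j^+)^*T_j^+
+ ((n-2j+2)²/(4(n-2j+1)))(T_j^-)^*T_j^- + (n(n+1)/8)c` together with
`T_{j+1}^+ T_j^+ = 0` and `T_{j-1}^- T_j^- = 0` decompose orthogonally as
`H_j = Im T_{j-1}^+ ⊕ Im T_{j+1}^- ⊕ ker(Δ_j - (n(n+1)/8)c)`, with
`ker T_j^+ = Im T_{j-1}^+ ⊕ ker(Δ_j - (n(n+1)/8)c)` and
`ker T_j^- = Im T_{j+1}^- ⊕ ker(Δ_j - (n(n+1)/8)c)`. -/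
theorem hodge_de_rham_decomposition (n N : ℕ) (c : ℝ) (hc : 0 < c) (hN : 2 * N + 1 < n)
    (H : ℕ → Type*) [∀ j, NormedAddCommGroup (H j)] [∀ j, InnerProductSpace ℝ (H j)]
    [∀ j, FiniteDimensional ℝ (H j)]
    (Tp : ∀ j, H j →ₗ[ℝ] H (j + 1)) (Tm : ∀ j, H (j + 1) →ₗ[ℝ] H j)
    (Δ : ∀ j, Module.End ℝ (H j))
    -- adjointness `T_j^+ = (T_{j+1}^-)^*`
    (hadj : ∀ j (x : H j) (y : H (j + 1)), ⟪Tp j x, y⟫ = ⟪x, Tm j y⟫)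
    -- `d² = 0`-type relations
    (hdd : ∀ j, Tp (j + 1) ∘ₗ Tp j = 0)
    (hdd' : ∀ j, Tm j ∘ₗ Tm (j + 1) = 0)
    -- the Laplacian identity at `j = 0` (`T_0^- = 0`)
    (hΔ0 : Δ 0 = ((n : ℝ) ^ 2 / (4 * ((n : ℝ) - 1))) • (Tm 0 ∘ₗ Tp 0 : Module.End ℝ (H 0))
        + ((n : ℝ) * ((n : ℝ) + 1) / 8 * c) • 1)
    -- the Laplacian identity at `1 ≤ j ≤ N`
    (hΔ : ∀ j : ℕ, j + 1 ≤ N → Δ (j + 1)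
        = (((n : ℝ) - 2 * ((j : ℝ) + 1)) ^ 2 / (4 * ((n : ℝ) - 2 * ((j : ℝ) + 1) - 1)))
            • (Tm (j + 1) ∘ₗ Tp (j + 1) : Module.End ℝ (H (j + 1)))
          + (((n : ℝ) - 2 * ((j : ℝ) + 1) + 2) ^ 2 / (4 * ((n : ℝ) - 2 * ((j : ℝ) + 1) + 1)))
            • (Tp j ∘ₗ Tm j : Module.End ℝ (H (j + 1)))
          + ((n : ℝ) * ((n : ℝ) + 1) / 8 * c) • 1) :
    ∀ j : ℕ, j + 1 ≤ N →
      (LinearMap.range (Tp j) ⊔ LinearMap.range (Tm (j + 1))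
          ⊔ LinearMap.ker (Δ (j + 1) - ((n : ℝ) * ((n : ℝ) + 1) / 8 * c) • 1) = ⊤)
      ∧ (∀ x ∈ LinearMap.range (Tp j), ∀ y ∈ LinearMap.range (Tm (j + 1)), ⟪x, y⟫ = 0)
      ∧ (∀ x ∈ LinearMap.range (Tp j),
          ∀ y ∈ LinearMap.ker (Δ (j + 1) - ((n : ℝ) * ((n : ℝ) + 1) / 8 * c) • 1), ⟪x, y⟫ = 0)
      ∧ (∀ x ∈ LinearMap.range (Tm (j + 1)),
          ∀ y ∈ LinearMap.ker (Δ (j + 1) - ((n : ℝ) * ((n : ℝ) + 1) / 8 * c) • 1), ⟪x, y⟫ = 0)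
      ∧ LinearMap.ker (Tp (j + 1))
          = LinearMap.range (Tp j)
            ⊔ LinearMap.ker (Δ (j + 1) - ((n : ℝ) * ((n : ℝ) + 1) / 8 * c) • 1)
      ∧ LinearMap.ker (Tm j)
          = LinearMap.range (Tm (j + 1))
            ⊔ LinearMap.ker (Δ (j + 1) - ((n : ℝ) * ((n : ℝ) + 1) / 8 * c) • 1) :=
  hodge_de_rham_decomposition_general n N c hN H Tp Tm Δ hadj hdd hΔ
end

section
/- For integers n ≥ 3 and 0 ≤ j ≤ ⌊n/2⌋, the dimension of the irreducible Spin(n)-module W_{δ_j} with highest weight ((3/2)_j, (1/2)_{m-j}) (summing both half-spin pieces when n is even) equals 2^⌊n/2⌋ · ((n-2j+1)/(n-j+1)) · C(n, j). -/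
open Finset

/-! Peeling off the first coordinate relates `δ_j` in rank `m + 1` to `δ_{j-1}` in rank `m`:
with `ρ_i = r - i`, the Weyl factors not involving index `0` are those of rank `m` shifted by one.
The remaining row `∏_k (L_0² - L_k²)/(ρ_0² - ρ_k²)` telescopes, so for `n ↦ n + 2` the
dimension gets multiplied by `2` when `j = 0` and by `2(n+1)(n+2)/((j+1)(n+2-j))` when
`j ↦ j + 1`. The closed form obeys the same recursions, by
`(j+1)(n+1-j) C(n+2, j+1) = (n+1)(n+2) C(n, j)`.
For even `n` both half-spin summands have the same dimension: `ρ_{m-1} = 0`, so negating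
`λ_{m-1}` only negates `L_{m-1}`, which enters the formula squared. -/

/-- Weyl dimension formula for `so(2m+1)` (type `B_m`). -/
def weylDimB (m : ℕ) (lam : Fin m → ℚ) : ℚ :=
  let d : Fin m → ℚ := fun i => (m : ℚ) - (i : ℚ) - 1/2
  let L : Fin m → ℚ := fun i => lam i + d i
  (∏ p ∈ univ.filter (fun p : Fin m × Fin m => p.1 < p.2),
      ((L p.1 - L p.2) * (L p.1 + L p.2)) / ((d p.1 - d p.2) * (d p.1 + d p.2)))
    * ∏ i, L i / d i

/-- Weyl dimension formula for `so(2m)` (type `D_m`). -/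
def weylDimD (m : ℕ) (lam : Fin m → ℚ) : ℚ :=
  let d : Fin m → ℚ := fun i => (m : ℚ) - (i : ℚ) - 1
  let L : Fin m → ℚ := fun i => lam i + d i
  ∏ p ∈ univ.filter (fun p : Fin m × Fin m => p.1 < p.2),
      ((L p.1 - L p.2) * (L p.1 + L p.2)) / ((d p.1 - d p.2) * (d p.1 + d p.2))

theorem prod_Ico_div_succ_of_ne_zero {K : Type*} [Field K] (f : ℕ → K) {a b : ℕ}
    (hab : a ≤ b) (hf : ∀ k ∈ Icc a b, f k ≠ 0) :
    ∏ k ∈ Ico a b, f k / f (k + 1) = f a / f b := by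
  induction b, hab using Nat.le_induction with
  | base => simp [div_self (hf a (by simp))]
  | succ b hab ih =>
    have hb : f b ≠ 0 := hf b (by simp [hab])
    have hb' : f (b + 1) ≠ 0 := hf (b + 1) (by simp; omega)
    rw [prod_Ico_succ_top hab, ih fun k hk => hf k (Icc_subset_Icc_right b.le_succ hk)]
    field_simp

theorem prod_fin_pairs_lt_eq_prod_range_Ioo {M : Type*} [CommMonoid M] (m : ℕ)
    (F : ℕ → ℕ → M) :
    ∏ p ∈ univ.filter (fun p : Fin m × Fin m => p.1 < p.2), F p.1 p.2
      = ∏ i ∈ range m, ∏ k ∈ Ioo i m, F i k := by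
  simp only [prod_filter, Fintype.prod_prod_type, Fin.lt_def]
  rw [Fin.prod_univ_eq_prod_range (fun i => ∏ k : Fin m, if i < (k : ℕ) then F i k else 1)]
  refine prod_congr rfl fun i _ => ?_
  rw [Fin.prod_univ_eq_prod_range (fun k => if i < k then F i k else 1), ← prod_filter]
  congr 1
  ext k
  simp [and_comm]

theorem prod_range_prod_Ioo_succ {M : Type*} [CommMonoid M] (m : ℕ) (F : ℕ → ℕ → M) :
    ∏ i ∈ range (m + 1), ∏ k ∈ Ioo i (m + 1), F i k
      = (∏ k ∈ Ico 1 (m + 1), F 0 k)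
        * ∏ i ∈ range m, ∏ k ∈ Ioo i m, F (i + 1) (k + 1) := by
  rw [prod_range_succ', mul_comm, ← Ico_add_one_left_eq_Ioo 0]
  congr 1
  refine prod_congr rfl fun i _ => ?_
  rw [← map_add_right_Ioo, prod_map]
  rfl

/-- The pair factor of Weyl's formula for `so(n)`, with `ρ_t = r - t`, `r = n/2 - 1` and
`L = λ + ρ`. -/
def weylFactor (r : ℚ) (lam : ℕ → ℚ) (i k : ℕ) : ℚ :=
  ((lam i + (r - i)) - (lam k + (r - k))) * ((lam i + (r - i)) + (lam k + (r - k)))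
    / (((r - i) - (r - k)) * ((r - i) + (r - k)))

def weylPairProd (r : ℚ) (lam : ℕ → ℚ) (m : ℕ) : ℚ :=
  ∏ i ∈ range m, ∏ k ∈ Ioo i m, weylFactor r lam i k

def weylDiagProd (r : ℚ) (lam : ℕ → ℚ) (m : ℕ) : ℚ :=
  ∏ i ∈ range m, (lam i + (r - i)) / (r - i)

theorem weylDimB_eq (m : ℕ) (lam : ℕ → ℚ) :
    weylDimB m (fun i => lam i)
      = weylPairProd (m - 1 / 2) lam m * weylDiagProd (m - 1 / 2) lam m := by
  rw [weylDimB, weylPairProd, weylDiagProd, ← prod_fin_pairs_lt_eq_prod_range_Ioo,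
    ← Fin.prod_univ_eq_prod_range (fun i => (lam i + (m - 1 / 2 - i)) / (m - 1 / 2 - i))]
  simp only [weylFactor, sub_right_comm _ _ (1 / 2 : ℚ)]

theorem weylDimD_eq (m : ℕ) (lam : ℕ → ℚ) :
    weylDimD m (fun i => lam i) = weylPairProd (m - 1) lam m := by
  rw [weylDimD, weylPairProd, ← prod_fin_pairs_lt_eq_prod_range_Ioo]
  simp only [weylFactor, sub_right_comm _ _ (1 : ℚ)]

theorem weylFactor_succ_succ (r : ℚ) (lam : ℕ → ℚ) (i k : ℕ) :
    weylFactor r lam (i + 1) (k + 1) = weylFactor (r - 1) (fun t => lam (t + 1)) i k := by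
  simp only [weylFactor]
  push_cast
  ring_nf

theorem weylPairProd_succ (r : ℚ) (lam : ℕ → ℚ) (m : ℕ) :
    weylPairProd r lam (m + 1) = (∏ k ∈ Ico 1 (m + 1), weylFactor r lam 0 k)
      * weylPairProd (r - 1) (fun t => lam (t + 1)) m := by
  simp only [weylPairProd, prod_range_prod_Ioo_succ, weylFactor_succ_succ]

theorem weylDiagProd_succ (r : ℚ) (lam : ℕ → ℚ) (m : ℕ) :
    weylDiagProd r lam (m + 1)
      = (lam 0 + r) / r * weylDiagProd (r - 1) (fun t => lam (t + 1)) m := by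
  rw [weylDiagProd, weylDiagProd, prod_range_succ', mul_comm]
  congr 1
  · simp
  · refine prod_congr rfl fun i _ => ?_
    push_cast
    ring_nf

theorem weylFactor_zero_left (r : ℚ) (lam : ℕ → ℚ) (k : ℕ) :
    weylFactor r lam 0 k
      = (lam 0 - lam k + k) * (lam 0 + lam k + 2 * r - k) / (k * (2 * r - k)) := by
  simp only [weylFactor]
  push_cast
  ring_nf

def deltaWeight (j i : ℕ) : ℚ := if i < j then 3 / 2 else 1 / 2

theorem deltaWeight_shift (j : ℕ) : (fun i => deltaWeight j (i + 1)) = deltaWeight (j - 1) := by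
  funext i
  simp only [deltaWeight]
  congr 1
  grind

theorem prod_weylFactor_deltaWeight_zero (r : ℚ) (m : ℕ) (hm : (m : ℚ) < 2 * r) :
    ∏ k ∈ Ico 1 (m + 1), weylFactor r (deltaWeight 0) 0 k = 2 * r / (2 * r - m) := by
  set P : ℕ → ℚ := fun t => 2 * r + 1 - t
  have hP : ∀ t ∈ Icc 1 (m + 1), 0 < P t := by
    intro t ht
    have : (t : ℚ) ≤ m + 1 := by exact_mod_cast (mem_Icc.1 ht).2
    simp only [P]; linarith
  have hfactor : ∀ k ∈ Ico 1 (m + 1), weylFactor r (deltaWeight 0) 0 k = P k / P (k + 1) := by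
    intro k hk
    have hk1 : (1 : ℚ) ≤ k := by exact_mod_cast (mem_Ico.1 hk).1
    have := hP (k + 1) (by grind)
    simp only [P] at this ⊢
    push_cast at this ⊢
    rw [weylFactor_zero_left, div_eq_div_iff (by apply ne_of_gt; apply_rules [mul_pos] <;> linarith)
      this.ne']
    simp only [deltaWeight, Nat.not_lt_zero, if_false]
    ring
  rw [prod_congr rfl hfactor, prod_Ico_div_succ_of_ne_zero P (by omega) fun t ht => (hP t ht).ne']
  simp only [P]
  push_cast
  ring_nf

theorem prod_weylFactor_deltaWeight_succ_of_lt (r : ℚ) (j : ℕ) (hj : (j : ℚ) < 2 * r) :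
    ∏ k ∈ Ico 1 (j + 1), weylFactor r (deltaWeight (j + 1)) 0 k
      = 2 * r * (2 * r + 1) * (2 * r + 2) / ((2 * r - j) * (2 * r + 1 - j) * (2 * r + 2 - j)) := by
  set G : ℕ → ℚ := fun t => (2 * r + 1 - t) * (2 * r + 2 - t) * (2 * r + 3 - t)
  have hG : ∀ t ∈ Icc 1 (j + 1), 0 < G t := by
    intro t ht
    have : (t : ℚ) ≤ j + 1 := by exact_mod_cast (mem_Icc.1 ht).2
    apply_rules [mul_pos] <;> linarith
  have hfactor : ∀ k ∈ Ico 1 (j + 1),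
      weylFactor r (deltaWeight (j + 1)) 0 k = G k / G (k + 1) := by
    intro k hk
    obtain ⟨hk1, hkj⟩ := mem_Ico.1 hk
    have : (1 : ℚ) ≤ k := by exact_mod_cast hk1
    have : (k : ℚ) ≤ j := by exact_mod_cast Nat.lt_succ_iff.1 hkj
    rw [weylFactor_zero_left, div_eq_div_iff (by apply ne_of_gt; apply_rules [mul_pos] <;> linarith)
      (hG (k + 1) (by grind)).ne']
    simp only [deltaWeight, G, if_pos hkj, if_pos j.succ_pos]
    push_cast
    ring
  rw [prod_congr rfl hfactor, prod_Ico_div_succ_of_ne_zero G (by omega) fun t ht => (hG t ht).ne']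
  simp only [G]
  push_cast
  ring_nf

theorem prod_weylFactor_deltaWeight_succ_of_ge (r : ℚ) {m j : ℕ} (hj : j ≤ m)
    (hm : (m : ℚ) < 2 * r) :
    ∏ k ∈ Ico (j + 1) (m + 1), weylFactor r (deltaWeight (j + 1)) 0 k
      = (m + 1) * (2 * r - j) * (2 * r + 1 - j) / ((j + 1) * (2 * r - m) * (2 * r + 1 - m)) := by
  set J : ℕ → ℚ := fun t => (2 * r + 1 - t) * (2 * r + 2 - t) / t
  have hJ : ∀ t ∈ Icc (j + 1) (m + 1), 0 < J t := by
    intro t ht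
    have : (t : ℚ) ≤ m + 1 := by exact_mod_cast (mem_Icc.1 ht).2
    have : (1 : ℚ) ≤ t := by exact_mod_cast (show 1 ≤ t by grind)
    exact div_pos (mul_pos (by linarith) (by linarith)) (by linarith)
  have hfactor : ∀ k ∈ Ico (j + 1) (m + 1),
      weylFactor r (deltaWeight (j + 1)) 0 k = J k / J (k + 1) := by
    intro k hk
    obtain ⟨hjk, hkm⟩ := mem_Ico.1 hk
    have : (1 : ℚ) ≤ k := by exact_mod_cast (show 1 ≤ k by omega)
    have : (k : ℚ) ≤ m := by exact_mod_cast Nat.lt_succ_iff.1 hkm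
    rw [weylFactor_zero_left, div_eq_div_iff (by apply ne_of_gt; apply_rules [mul_pos] <;> linarith)
      (hJ (k + 1) (by grind)).ne']
    simp only [deltaWeight, J, if_neg (show ¬k < j + 1 by omega), if_pos j.succ_pos]
    push_cast
    field_simp
    ring
  have hjm : (j : ℚ) ≤ m := by exact_mod_cast hj
  have hj0 : (0 : ℚ) ≤ j := j.cast_nonneg
  rw [prod_congr rfl hfactor, prod_Ico_div_succ_of_ne_zero J (by omega) fun t ht => (hJ t ht).ne']
  simp only [J]
  push_cast
  rw [div_div_div_eq, div_eq_div_iff (by apply ne_of_gt; apply_rules [mul_pos] <;> linarith)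
    (by apply ne_of_gt; apply_rules [mul_pos] <;> linarith)]
  ring

theorem prod_weylFactor_deltaWeight_succ (r : ℚ) {m j : ℕ} (hj : j ≤ m)
    (hm : (m : ℚ) < 2 * r) :
    ∏ k ∈ Ico 1 (m + 1), weylFactor r (deltaWeight (j + 1)) 0 k
      = 2 * r * (2 * r + 1) * (2 * r + 2) * (m + 1)
        / ((j + 1) * (2 * r + 2 - j) * (2 * r - m) * (2 * r + 1 - m)) := by
  have hjm : (j : ℚ) ≤ m := by exact_mod_cast hj
  rw [← prod_Ico_consecutive _ (show 1 ≤ j + 1 by omega) (show j + 1 ≤ m + 1 by omega),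
    prod_weylFactor_deltaWeight_succ_of_lt r j (by linarith),
    prod_weylFactor_deltaWeight_succ_of_ge r hj hm, div_mul_div_comm,
    div_eq_div_iff (by apply ne_of_gt; apply_rules [mul_pos] <;> linarith)
      (by apply ne_of_gt; apply_rules [mul_pos] <;> linarith)]
  ring

theorem weylDimB_deltaWeight_succ (m j : ℕ) :
    weylDimB (m + 1) (fun i => deltaWeight j i)
      = (∏ k ∈ Ico 1 (m + 1), weylFactor (m + 1 / 2) (deltaWeight j) 0 k)
        * ((deltaWeight j 0 + (m + 1 / 2)) / (m + 1 / 2))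
        * weylDimB m (fun i => deltaWeight (j - 1) i) := by
  have hr : ((m + 1 : ℕ) : ℚ) - 1 / 2 = m + 1 / 2 := by push_cast; ring
  have hr' : (m : ℚ) + 1 / 2 - 1 = m - 1 / 2 := by ring
  rw [weylDimB_eq, weylDimB_eq, hr, weylPairProd_succ, weylDiagProd_succ, hr', deltaWeight_shift]
  ring

theorem weylDimB_deltaWeight_succ_zero (m : ℕ) :
    weylDimB (m + 1) (fun i => deltaWeight 0 i) = 2 * weylDimB m (fun i => deltaWeight 0 i) := by
  have hm : (0 : ℚ) ≤ m := m.cast_nonneg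
  rw [weylDimB_deltaWeight_succ, prod_weylFactor_deltaWeight_zero _ _ (by linarith)]
  simp only [deltaWeight, Nat.not_lt_zero, if_false]
  congr 1
  rw [div_mul_div_comm, div_eq_iff (by apply ne_of_gt; apply_rules [mul_pos] <;> linarith)]
  ring

theorem weylDimB_deltaWeight_succ_succ {m j : ℕ} (hj : j ≤ m) :
    weylDimB (m + 1) (fun i => deltaWeight (j + 1) i)
      = 2 * (2 * m + 2) * (2 * m + 3) / ((j + 1) * (2 * m + 3 - j))
        * weylDimB m (fun i => deltaWeight j i) := by
  have hjm : (j : ℚ) ≤ m := by exact_mod_cast hj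
  have hj0 : (0 : ℚ) ≤ j := j.cast_nonneg
  rw [weylDimB_deltaWeight_succ, prod_weylFactor_deltaWeight_succ _ hj (by linarith)]
  simp only [deltaWeight, Nat.succ_pos, if_true, Nat.add_sub_cancel]
  congr 1
  rw [div_mul_div_comm, div_eq_div_iff (by apply ne_of_gt; apply_rules [mul_pos] <;> linarith)
    (by apply ne_of_gt; apply_rules [mul_pos] <;> linarith)]
  ring

theorem weylDimD_deltaWeight_succ (m j : ℕ) :
    weylDimD (m + 1) (fun i => deltaWeight j i)
      = (∏ k ∈ Ico 1 (m + 1), weylFactor m (deltaWeight j) 0 k)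
        * weylDimD m (fun i => deltaWeight (j - 1) i) := by
  rw [weylDimD_eq, weylDimD_eq, Nat.cast_succ, add_sub_cancel_right, weylPairProd_succ,
    deltaWeight_shift]

theorem weylDimD_deltaWeight_succ_zero {m : ℕ} (hm : 1 ≤ m) :
    weylDimD (m + 1) (fun i => deltaWeight 0 i) = 2 * weylDimD m (fun i => deltaWeight 0 i) := by
  have hm' : (1 : ℚ) ≤ m := by exact_mod_cast hm
  rw [weylDimD_deltaWeight_succ, prod_weylFactor_deltaWeight_zero _ _ (by linarith)]
  congr 1
  rw [div_eq_iff (by linarith)]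
  ring

theorem weylDimD_deltaWeight_succ_succ {m j : ℕ} (hj : j ≤ m) (hm : 1 ≤ m) :
    weylDimD (m + 1) (fun i => deltaWeight (j + 1) i)
      = 2 * (2 * m + 1) * (2 * m + 2) / ((j + 1) * (2 * m + 2 - j))
        * weylDimD m (fun i => deltaWeight j i) := by
  have hjm : (j : ℚ) ≤ m := by exact_mod_cast hj
  have hm' : (1 : ℚ) ≤ m := by exact_mod_cast hm
  have hj0 : (0 : ℚ) ≤ j := j.cast_nonneg
  rw [weylDimD_deltaWeight_succ, prod_weylFactor_deltaWeight_succ _ hj (by linarith),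
    Nat.add_sub_cancel]
  congr 1
  rw [div_eq_div_iff (by apply ne_of_gt; apply_rules [mul_pos] <;> linarith)
    (by apply ne_of_gt; apply_rules [mul_pos] <;> linarith)]
  ring

theorem weylDimD_neg_last (m : ℕ) (lam : ℕ → ℚ) :
    weylDimD m (fun i => lam i * (if (i : ℕ) = m - 1 then -1 else 1))
      = weylDimD m (fun i => lam i) := by
  rw [weylDimD_eq m (fun t => lam t * (if t = m - 1 then -1 else 1)), weylDimD_eq]
  refine prod_congr rfl fun i hi => prod_congr rfl fun k hk => ?_
  obtain ⟨hik, hkm⟩ := mem_Ioo.1 hk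
  simp only [weylFactor, if_neg (show i ≠ m - 1 by omega)]
  split_ifs with hlast
  · rw [hlast, Nat.cast_sub (by omega)]
    ring
  · ring

def deltaDim (n j : ℕ) : ℚ :=
  2 ^ (n / 2) * (((n : ℚ) - 2 * (j : ℚ) + 1) / ((n : ℚ) - (j : ℚ) + 1)) * (n.choose j : ℚ)

theorem Nat.choose_add_two_succ_mul (n j : ℕ) :
    (n + 2).choose (j + 1) * (j + 1) * (n + 1 - j) = n.choose j * (n + 1) * (n + 2) := by
  have h1 := Nat.add_one_mul_choose_eq n j
  have h2 := Nat.choose_mul_succ_eq (n + 1) (j + 1)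
  rw [show n + 1 + 1 - (j + 1) = n + 1 - j by omega] at h2
  calc (n + 2).choose (j + 1) * (j + 1) * (n + 1 - j)
      = (n + 1 + 1).choose (j + 1) * (n + 1 - j) * (j + 1) := by ring
    _ = (n + 1).choose (j + 1) * (j + 1) * (n + 2) := by rw [← h2]; ring
    _ = n.choose j * (n + 1) * (n + 2) := by rw [← h1]; ring

theorem deltaDim_add_two_zero (n : ℕ) : deltaDim (n + 2) 0 = 2 * deltaDim n 0 := by
  simp only [deltaDim, Nat.add_div_right n two_pos, pow_succ, Nat.choose_zero_right,
    Nat.cast_zero, mul_zero, sub_zero]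
  push_cast
  rw [div_self (by positivity), div_self (by positivity)]
  ring

theorem deltaDim_add_two_succ {n j : ℕ} (hj : j ≤ n) :
    deltaDim (n + 2) (j + 1)
      = 2 * (n + 1) * (n + 2) / ((j + 1) * (n + 2 - j)) * deltaDim n j := by
  have hjn : (j : ℚ) ≤ n := by exact_mod_cast hj
  have hj0 : (0 : ℚ) ≤ j := j.cast_nonneg
  have hchoose : ((n + 2).choose (j + 1) : ℚ)
      = n.choose j * (n + 1) * (n + 2) / ((j + 1) * (n + 1 - j)) := by
    have h := congrArg (Nat.cast (R := ℚ)) (Nat.choose_add_two_succ_mul n j)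
    push_cast [Nat.cast_sub (show j ≤ n + 1 by omega)] at h
    rw [eq_div_iff (by apply ne_of_gt; apply_rules [mul_pos] <;> linarith), ← h]
    ring
  simp only [deltaDim, Nat.add_div_right n two_pos, pow_succ, hchoose]
  push_cast
  have : (j : ℚ) + 1 ≠ 0 := by linarith
  have : (n : ℚ) + 1 - j ≠ 0 := by linarith
  have : (n : ℚ) + 2 - j ≠ 0 := by linarith
  have : (n : ℚ) - j + 1 ≠ 0 := by linarith
  have : (n : ℚ) + 2 - (j + 1) + 1 ≠ 0 := by linarith
  field_simp
  ring

theorem weylDimB_deltaWeight (m j : ℕ) (hj : j ≤ m) :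
    weylDimB m (fun i => deltaWeight j i) = deltaDim (2 * m + 1) j := by
  induction m generalizing j with
  | zero =>
    obtain rfl : j = 0 := by omega
    simp [weylDimB, deltaDim]
  | succ m ih =>
    rw [show 2 * (m + 1) + 1 = 2 * m + 1 + 2 by ring]
    cases j with
    | zero => rw [weylDimB_deltaWeight_succ_zero, ih 0 m.zero_le, deltaDim_add_two_zero]
    | succ j =>
      rw [weylDimB_deltaWeight_succ_succ (by omega), ih j (by omega),
        deltaDim_add_two_succ (by omega)]
      push_cast
      ring

theorem two_mul_weylDimD_deltaWeight (m j : ℕ) (hj : j ≤ m) (hm : 1 ≤ m) :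
    2 * weylDimD m (fun i => deltaWeight j i) = deltaDim (2 * m) j := by
  induction m, hm using Nat.le_induction generalizing j with
  | base =>
    have hone : weylPairProd 0 (deltaWeight j) 1 = 1 := by
      rw [weylPairProd, prod_range_one]
      exact prod_empty
    rw [weylDimD_eq, Nat.cast_one, sub_self, hone]
    interval_cases j <;> norm_num [deltaDim]
  | succ m hm ih =>
    rw [show 2 * (m + 1) = 2 * m + 2 by ring]
    cases j with
    | zero => rw [weylDimD_deltaWeight_succ_zero hm, mul_left_comm, ih 0 m.zero_le,
        deltaDim_add_two_zero]
    | succ j =>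
      rw [weylDimD_deltaWeight_succ_succ (by omega) hm, mul_left_comm, ih j (by omega),
        deltaDim_add_two_succ (by omega)]
      push_cast
      ring

/-- The irreducible `Spin(n)`-module `W_{δ_j}` of highest weight
`((3/2)_j, (1/2)_{m-j})` (for even `n`, the sum of both half-spin pieces, the
second having its last coordinate negated) has dimension
`2^⌊n/2⌋ · (n-2j+1)/(n-j+1) · C(n,j)`, as computed by Weyl's dimension formula. -/
theorem dim_W_delta_j (n j : ℕ) (hn : 3 ≤ n) (hj : j ≤ n / 2) :
    (∀ m : ℕ, n = 2 * m + 1 →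
      weylDimB m (fun i => if (i : ℕ) < j then 3/2 else 1/2)
        = 2 ^ (n / 2) * (((n : ℚ) - 2 * (j : ℚ) + 1) / ((n : ℚ) - (j : ℚ) + 1))
            * (n.choose j : ℚ)) ∧
    (∀ m : ℕ, n = 2 * m →
      weylDimD m (fun i => if (i : ℕ) < j then 3/2 else 1/2)
      + weylDimD m (fun i =>
          (if (i : ℕ) < j then (3 : ℚ)/2 else 1/2) * (if (i : ℕ) = m - 1 then -1 else 1))
        = 2 ^ (n / 2) * (((n : ℚ) - 2 * (j : ℚ) + 1) / ((n : ℚ) - (j : ℚ) + 1))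
            * (n.choose j : ℚ)) := by
  refine ⟨fun m hm => ?_, fun m hm => ?_⟩
  · subst hm
    exact weylDimB_deltaWeight m j (by omega)
  · subst hm
    have hsign := weylDimD_neg_last m (deltaWeight j)
    have hdim := two_mul_weylDimD_deltaWeight m j (by omega) (by omega)
    simp only [deltaWeight, deltaDim] at hsign hdim
    rw [hsign, ← two_mul, hdim]
end
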